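/- arXiv:2505.07982 — 9 statements merged into one kernel-verified Lean document; each statement's English description precedes it below -/
import Mathlib

section
/- For every x ∈ ℝ^c with 𝟙ᵀx = 0 and every t ∈ ℝ, one has U_N(t) · (x, 0) = e^{iαt} · ( U_M(t) · x , 0 ). -/
/-!
Let `Π = I - 𝟙𝟙ᵀ / c` be the orthogonal projection onto `𝟙^⊥` and `J = (Π; 0)`. As `M` is
symmetric with `M𝟙 = μ𝟙`, it commutes with `𝟙𝟙ᵀ`, hence with `Π`; and `BᵀΠ = 0` because every
column of `Bᵀ` is the same vector `w`. Therefore `N J = J (αI + M)`. Such an intertwining passes to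
exponentials, so `U_N(t) J = J U_{αI+M}(t) = e^{iαt} J U_M(t)`, and applying this to `x = Πx`
gives the claim since `Π` commutes with `U_M(t)`.
-/

open Matrix

noncomputable def U {ι : Type*} [Fintype ι] [DecidableEq ι]
    (R : Matrix ι ι ℝ) (t : ℝ) : Matrix ι ι ℂ :=
  NormedSpace.exp ((Complex.I * (t : ℂ)) • R.map (Complex.ofReal ·))

open NormedSpace

namespace Matrix

theorem fromBlocks_mul_fromRows_zero_of_commute {ι κ R : Type*} [Fintype ι] [Fintype κ]
    [Semiring R] {A : Matrix ι ι R} {B : Matrix ι κ R} {C : Matrix κ ι R} {D : Matrix κ κ R}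
    {P : Matrix ι ι R} (hA : Commute A P) (hC : C * P = 0) :
    fromBlocks A B C D * fromRows P (0 : Matrix κ ι R) = fromRows P 0 * A := by
  rw [fromBlocks_mul_fromRows, fromRows_mul, hA.eq, hC]
  simp

variable {ι κ 𝕂 : Type*} [Fintype ι] [DecidableEq ι] [Fintype κ] [DecidableEq κ] [RCLike 𝕂]

theorem exp_series_hasSum_exp (N : Matrix κ κ 𝕂) :
    HasSum (fun n => (n.factorial⁻¹ : 𝕂) • N ^ n) (exp N) := by
  open scoped Matrix.Norms.Operator in
  exact exp_series_hasSum_exp' N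

theorem exp_mul_eq_mul_exp_of_mul_eq {N : Matrix κ κ 𝕂} {A : Matrix ι ι 𝕂} {J : Matrix κ ι 𝕂}
    (h : N * J = J * A) : exp N * J = J * exp A := by
  have hpow (n : ℕ) : N ^ n * J = J * A ^ n := by
    induction n with
    | zero => simp
    | succ n ih =>
      rw [pow_succ', Matrix.mul_assoc, ih, ← Matrix.mul_assoc, h, Matrix.mul_assoc, ← pow_succ']
  have hN : HasSum (fun n => (n.factorial⁻¹ : 𝕂) • (N ^ n * J)) (exp N * J) := by
    simpa [Function.comp_def] using (exp_series_hasSum_exp N).map (mulRightLinearMap κ 𝕂 J)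
      (continuous_id.matrix_mul continuous_const)
  have hA : HasSum (fun n => (n.factorial⁻¹ : 𝕂) • (J * A ^ n)) (J * exp A) := by
    simpa [Function.comp_def] using (exp_series_hasSum_exp A).map (mulLeftLinearMap ι 𝕂 J)
      (continuous_const.matrix_mul continuous_id)
  simp only [hpow] at hN
  exact hN.unique hA

theorem exp_smul_one_add (a : 𝕂) (X : Matrix ι ι 𝕂) : exp (a • 1 + X) = exp a • exp X := by
  rw [exp_add_of_commute _ _ ((Commute.one_left X).smul_left a), smul_one_eq_diagonal,
    exp_diagonal, Pi.exp_def, ← smul_one_eq_diagonal, smul_one_mul]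

end Matrix

section centering

variable {ι κ K : Type*} [Fintype ι] [DecidableEq ι] [Field K]

variable (ι K) in
def centeringMatrix : Matrix ι ι K := 1 - (Fintype.card ι : K)⁻¹ • of fun _ _ => 1

theorem centeringMatrix_mulVec_of_sum_eq_zero {x : ι → K} (hx : ∑ i, x i = 0) :
    centeringMatrix ι K *ᵥ x = x := by
  have h : (of fun (_ _ : ι) => (1 : K)) *ᵥ x = 0 := by
    ext i
    simp [mulVec, dotProduct, hx]
  rw [centeringMatrix, sub_mulVec, one_mulVec, smul_mulVec, h, smul_zero, sub_zero]

theorem sum_centeringMatrix_apply [Nonempty ι] [CharZero K] (j : ι) :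
    ∑ i, centeringMatrix ι K i j = 0 := by
  simp [centeringMatrix, one_apply, Finset.sum_sub_distrib]

theorem mul_centeringMatrix_of_apply_eq {B : Matrix κ ι K} {w : κ → K} [Nonempty ι] [CharZero K]
    (hB : ∀ j i, B j i = w j) : B * centeringMatrix ι K = 0 := by
  ext j k
  simp [mul_apply, hB, ← Finset.mul_sum, sum_centeringMatrix_apply]

theorem commute_centeringMatrix {M : Matrix ι ι K} {μ : K}
    (hrow : M *ᵥ (fun _ => 1) = μ • fun _ => 1) (hcol : (fun _ => 1) ᵥ* M = μ • fun _ => 1) :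
    Commute M (centeringMatrix ι K) := by
  have h : Commute M (of fun _ _ => 1) := by
    ext i j
    simpa [mul_apply, mulVec, vecMul, dotProduct] using
      (congrFun hrow i).trans (congrFun hcol j).symm
  exact (Commute.one_right M).sub_right (h.smul_right _)

end centering

section transition

variable {ι κ : Type*} [Fintype ι] [DecidableEq ι] [Fintype κ] [DecidableEq κ]

theorem U_mul_map_of_mul_eq {R : Matrix κ κ ℝ} {A : Matrix ι ι ℝ} {J : Matrix κ ι ℝ}
    (h : R * J = J * A) (t : ℝ) :
    U R t * J.map (Complex.ofReal ·) = J.map (Complex.ofReal ·) * U A t := by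
  refine exp_mul_eq_mul_exp_of_mul_eq ?_
  have h' := congrArg (Matrix.map · Complex.ofRealHom) h
  simp only [Matrix.map_mul] at h'
  rw [Matrix.smul_mul, Matrix.mul_smul]
  exact congrArg _ h'

theorem U_smul_one_add (a : ℝ) (M : Matrix ι ι ℝ) (t : ℝ) :
    U (a • 1 + M) t = Complex.exp (Complex.I * a * t) • U M t := by
  have hmap : (a • 1 + M).map (Complex.ofReal ·) = (a : ℂ) • 1 + M.map (Complex.ofReal ·) := by
    ext i j
    by_cases hij : i = j <;> simp [one_apply, hij]
  rw [U, hmap, smul_add, smul_smul, exp_smul_one_add, ← Complex.exp_eq_exp_ℂ, U]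
  ring_nf

end transition

theorem stmt1_general (c m : ℕ) (hc : 1 ≤ c)
    (M : Matrix (Fin c) (Fin c) ℝ) (hM : M.IsSymm)
    (μ α : ℝ) (hμ : M *ᵥ (fun _ => (1 : ℝ)) = μ • fun _ => (1 : ℝ))
    (w : Fin m → ℝ)
    (B : Matrix (Fin c) (Fin m) ℝ) (hB : ∀ i j, B i j = w j)
    (D : Matrix (Fin m) (Fin m) ℝ)
    (N : Matrix (Fin c ⊕ Fin m) (Fin c ⊕ Fin m) ℝ)
    (hN : N = Matrix.fromBlocks (α • (1 : Matrix (Fin c) (Fin c) ℝ) + M) B Bᵀ D)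
    (x : Fin c → ℝ) (hx : ∑ i, x i = 0) :
    ∀ t : ℝ,
      U N t *ᵥ Sum.elim (fun i => (x i : ℂ)) 0 =
        Complex.exp (Complex.I * α * t) • Sum.elim (U M t *ᵥ fun i => (x i : ℂ)) 0 := by
  intro t
  have : Nonempty (Fin c) := ⟨⟨0, hc⟩⟩
  set P := centeringMatrix (Fin c) ℝ
  set x' : Fin c → ℂ := fun i => (x i : ℂ)
  have hMP : Commute M P := commute_centeringMatrix hμ (by rw [← hM.eq, vecMul_transpose, hμ])
  have hNJ : N * fromRows P 0 = fromRows P 0 * (α • 1 + M) := hN ▸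
    fromBlocks_mul_fromRows_zero_of_commute (((Commute.one_left P).smul_left α).add_left hMP)
      (mul_centeringMatrix_of_apply_eq fun j i => hB i j)
  have hPx : P.map (Complex.ofReal ·) *ᵥ x' = x' := by
    ext i
    simpa [mulVec, dotProduct, x'] using
      congrArg Complex.ofReal (congrFun (centeringMatrix_mulVec_of_sum_eq_zero hx) i)
  calc U N t *ᵥ Sum.elim x' 0
      = U N t *ᵥ ((fromRows P 0).map (Complex.ofReal ·) *ᵥ x') := by
        rw [fromRows_map, fromRows_mulVec, hPx]
        simp
    _ = (fromRows P 0).map (Complex.ofReal ·) *ᵥ (U (α • 1 + M) t *ᵥ x') := by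
        rw [mulVec_mulVec, U_mul_map_of_mul_eq hNJ, ← mulVec_mulVec]
    _ = Complex.exp (Complex.I * α * t) •
          Sum.elim (P.map (Complex.ofReal ·) *ᵥ (U M t *ᵥ x')) 0 := by
        rw [U_smul_one_add, smul_mulVec, mulVec_smul, fromRows_map, fromRows_mulVec]
        simp
    _ = Complex.exp (Complex.I * α * t) • Sum.elim (U M t *ᵥ x') 0 := by
        rw [mulVec_mulVec, ← U_mul_map_of_mul_eq hMP.eq, ← mulVec_mulVec, hPx]

/-- For every `x ∈ ℝ^c` with `𝟙ᵀx = 0` and every `t ∈ ℝ`,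
`U_N(t) ⬝ (x, 0) = e^{iαt} · (U_M(t) ⬝ x, 0)`. -/
theorem stmt1 (c m : ℕ) (hc : 1 ≤ c)
    (M : Matrix (Fin c) (Fin c) ℝ) (hM : M.IsSymm)
    (μ α : ℝ) (hμ : M *ᵥ (fun _ => (1 : ℝ)) = μ • fun _ => (1 : ℝ))
    (w : Fin m → ℝ)
    (B : Matrix (Fin c) (Fin m) ℝ) (hB : ∀ i j, B i j = w j)
    (D : Matrix (Fin m) (Fin m) ℝ) (hD : D.IsSymm)
    (N : Matrix (Fin c ⊕ Fin m) (Fin c ⊕ Fin m) ℝ)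
    (hN : N = Matrix.fromBlocks (α • (1 : Matrix (Fin c) (Fin c) ℝ) + M) B Bᵀ D)
    (x : Fin c → ℝ) (hx : ∑ i, x i = 0) :
    ∀ t : ℝ,
      U N t *ᵥ Sum.elim (fun i => (x i : ℂ)) 0 =
        Complex.exp (Complex.I * α * t) • Sum.elim (U M t *ᵥ fun i => (x i : ℂ)) 0 :=
  stmt1_general c m hc M hM μ α hμ w B hB D N hN x hx
end

section
/- Let n ≥ 4 and let G be the simple graph on vertex set {0, 1, …, n−1} obtained from the complete graph K_n by deleting the two disjoint edges {0,1} and {2,3}. Then for each of the three matrices M ∈ { A(G), L(G), Q(G) } there exists γ ∈ ℂ with |γ| = 1 such that exp(i·(π/2)·M) · (e_0 − e_2) = γ · (e_1 − e_3). That is, removing a matching of size two from K_n yields pair state transfer relative to the adjacency, Laplacian, and signless Laplacian matrices between the same pair of states at time π/2. -/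
/-!
With `x = e₀ − e₂` and `y = e₁ − e₃`, the vectors `x − y = e₀ − e₁ − e₂ + e₃` and
`x + y = e₀ + e₁ − e₂ − e₃` are eigenvectors of `A`, with eigenvalues `0` and `−2`: a vertex outside
`{0, 1, 2, 3}` sees all four of them, and each of these four misses only itself and its partner.
All four vertices have degree `n − 2`, so `x ∓ y` are also eigenvectors of `L = D − A` and
`Q = D + A`, with eigenvalues differing by `±2`. At time `π/2` an eigenvalue gap `≡ 2 (mod 4)`
becomes the relative phase `−1`, and `exp(iπM/2)` sends `x = ((x − y) + (x + y))/2` to a unimodular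
multiple of `y`.
-/

open Matrix

/-- The standard basis vector `e_v` as a complex vector. -/
def ket {ι : Type*} [DecidableEq ι] (v : ι) : ι → ℂ :=
  fun i => if i = v then 1 else 0

open Complex
open scoped Real

theorem ket_eq_single {ι : Type*} [DecidableEq ι] (v : ι) : ket v = Pi.single v 1 := by
  funext i
  simp [ket, Pi.single_apply]

theorem Matrix.exp_mulVec_of_mulVec_eq_smul {ι 𝕂 : Type*} [Fintype ι] [DecidableEq ι] [RCLike 𝕂]
    {M : Matrix ι ι 𝕂} {x : ι → 𝕂} {μ : 𝕂} (h : M *ᵥ x = μ • x) :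
    NormedSpace.exp M *ᵥ x = NormedSpace.exp μ • x := by
  -- Every column of `vecMulVec x 1` is `x`, so `M` intertwines it with the scalar `μ`.
  have hX : SemiconjBy (vecMulVec x 1) (algebraMap 𝕂 _ μ) M := by
    rw [SemiconjBy, ← Algebra.commutes, ← Algebra.smul_def, mul_vecMulVec, h, smul_vecMulVec]
  have hexp : SemiconjBy (vecMulVec x 1) (algebraMap 𝕂 _ (NormedSpace.exp μ))
      (NormedSpace.exp M) := by
    open scoped Norms.Operator in
    rw [NormedSpace.algebraMap_exp_comm]
    exact hX.exp_right
  rw [SemiconjBy, ← Algebra.commutes, ← Algebra.smul_def, mul_vecMulVec, ← smul_vecMulVec] at hexp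
  funext i
  simpa using (congrFun₂ hexp i i).symm

section Transfer

variable {ι : Type*} [Fintype ι] [DecidableEq ι]

theorem U_mulVec_of_mulVec_eq_smul (R : Matrix ι ι ℝ) (t : ℝ) {x : ι → ℂ} {μ : ℝ}
    (h : R.map (↑) *ᵥ x = (μ : ℂ) • x) : U R t *ᵥ x = exp (I * t * μ) • x := by
  have hN : ((I * t) • R.map (↑)) *ᵥ x = (I * t * μ) • x := by rw [smul_mulVec, h, smul_smul]
  rw [U, exp_mulVec_of_mulVec_eq_smul hN, exp_eq_exp_ℂ]

theorem exists_U_pi_div_two_mulVec_eq_smul (R : Matrix ι ι ℝ) {x y : ι → ℂ} {μ ν : ℝ} (k : ℤ)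
    (hsub : R.map (↑) *ᵥ (x - y) = (μ : ℂ) • (x - y))
    (hadd : R.map (↑) *ᵥ (x + y) = (ν : ℂ) • (x + y))
    (hμν : μ = ν + 4 * k + 2) :
    ∃ γ : ℂ, ‖γ‖ = 1 ∧ U R (π / 2) *ᵥ x = γ • y := by
  have hphase : exp (I * ↑(π / 2) * μ) = -exp (I * ↑(π / 2) * ν) := by
    rw [hμν]
    push_cast
    rw [show I * (π / 2) * (ν + 4 * k + 2) = I * (π / 2) * ν + k * (2 * π * I) + π * I by ring,
      exp_add, exp_add, exp_int_mul_two_pi_mul_I, exp_pi_mul_I]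
    ring
  refine ⟨exp (I * ↑(π / 2) * ν), by rw [mul_assoc, ← ofReal_mul]; exact norm_exp_I_mul_ofReal _,
    ?_⟩
  have h2 : (2 : ℂ) • (U R (π / 2) *ᵥ x) = (2 : ℂ) • (exp (I * ↑(π / 2) * ν) • y) := by
    rw [← mulVec_smul, show (2 : ℂ) • x = (x - y) + (x + y) by module, mulVec_add,
      U_mulVec_of_mulVec_eq_smul R _ hsub, U_mulVec_of_mulVec_eq_smul R _ hadd, hphase]
    module
  exact smul_right_injective _ two_ne_zero h2

end Transfer

namespace SimpleGraph

variable {V : Type*} (G : SimpleGraph V) [DecidableRel G.Adj]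

theorem adjMatrix_map_ofReal : (G.adjMatrix ℝ).map (↑) = G.adjMatrix ℂ := by
  ext i j
  simp [adjMatrix_apply, apply_ite]

variable [Fintype V] [DecidableEq V]

theorem lapMatrix_map_ofReal : (G.lapMatrix ℝ).map (↑) = G.degMatrix ℂ - G.adjMatrix ℂ := by
  ext i j
  by_cases h : i = j <;> simp [lapMatrix, degMatrix, adjMatrix_apply, apply_ite, h]

theorem degMatrix_add_adjMatrix_map_ofReal :
    (G.degMatrix ℝ + G.adjMatrix ℝ).map (↑) = G.degMatrix ℂ + G.adjMatrix ℂ := by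
  ext i j
  by_cases h : i = j <;> simp [degMatrix, adjMatrix_apply, apply_ite, h]

theorem adjMatrix_mulVec_ket_apply (u v : V) :
    (G.adjMatrix ℂ *ᵥ ket v) u = if G.Adj u v then 1 else 0 := by
  simp [ket_eq_single]

theorem degMatrix_mulVec_ket (v : V) : G.degMatrix ℂ *ᵥ ket v = (G.degree v : ℂ) • ket v := by
  funext u
  by_cases h : u = v <;> simp [ket_eq_single, degMatrix, h]

theorem degree_eq_card_sub_two {u w : V} (huw : u ≠ w) (h : ∀ v, G.Adj u v ↔ u ≠ v ∧ v ≠ w) :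
    G.degree u = Fintype.card V - 2 := by
  have : G.neighborFinset u = {u, w}ᶜ := by
    ext v
    simp [h, eq_comm]
  rw [← card_neighborFinset_eq_degree, this, Finset.card_compl, Finset.card_pair huw]

variable {G} {a : Fin 4 ↪ V}

theorem adjMatrix_mulVec_eq_zero (hG : G = ⊤ \ fromEdgeSet {s(a 0, a 1), s(a 2, a 3)}) :
    G.adjMatrix ℂ *ᵥ ((ket (a 0) - ket (a 2)) - (ket (a 1) - ket (a 3))) = 0 := by
  subst hG
  funext u
  simp only [mulVec_sub, Pi.sub_apply, adjMatrix_mulVec_ket_apply]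
  by_cases hu : u ∈ Set.range a
  · obtain ⟨k, rfl⟩ := hu
    fin_cases k <;> simp
  · have hu' : ∀ k, u ≠ a k := fun k hk => hu ⟨k, hk.symm⟩
    simp [hu']

theorem adjMatrix_mulVec_eq_neg_two_smul
    (hG : G = ⊤ \ fromEdgeSet {s(a 0, a 1), s(a 2, a 3)}) :
    G.adjMatrix ℂ *ᵥ ((ket (a 0) - ket (a 2)) + (ket (a 1) - ket (a 3))) =
      (-2 : ℂ) • ((ket (a 0) - ket (a 2)) + (ket (a 1) - ket (a 3))) := by
  subst hG
  funext u
  simp only [mulVec_add, mulVec_sub, Pi.add_apply, Pi.sub_apply, Pi.smul_apply,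
    adjMatrix_mulVec_ket_apply]
  by_cases hu : u ∈ Set.range a
  · obtain ⟨k, rfl⟩ := hu
    fin_cases k <;> simp [ket] <;> norm_num
  · have hu' : ∀ k, u ≠ a k := fun k hk => hu ⟨k, hk.symm⟩
    simp [ket, hu']

theorem degree_apply_eq_card_sub_two (hG : G = ⊤ \ fromEdgeSet {s(a 0, a 1), s(a 2, a 3)})
    (k : Fin 4) : G.degree (a k) = Fintype.card V - 2 := by
  subst hG
  fin_cases k
  · exact degree_eq_card_sub_two _ (w := a 1) (by simp) fun v => by simp; tauto
  · exact degree_eq_card_sub_two _ (w := a 0) (by simp) fun v => by simp; tauto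
  · exact degree_eq_card_sub_two _ (w := a 3) (by simp) fun v => by simp; tauto
  · exact degree_eq_card_sub_two _ (w := a 2) (by simp) fun v => by simp; tauto

theorem exists_pair_state_transfer (hG : G = ⊤ \ fromEdgeSet {s(a 0, a 1), s(a 2, a 3)}) :
    ∀ M ∈ ({G.adjMatrix ℝ, G.lapMatrix ℝ, G.degMatrix ℝ + G.adjMatrix ℝ} : Set (Matrix V V ℝ)),
      ∃ γ : ℂ, ‖γ‖ = 1 ∧
        U M (π / 2) *ᵥ (ket (a 0) - ket (a 2)) = γ • (ket (a 1) - ket (a 3)) := by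
  set d : ℝ := ((Fintype.card V - 2 : ℕ) : ℝ)
  have hD (k : Fin 4) : G.degMatrix ℂ *ᵥ ket (a k) = (d : ℂ) • ket (a k) := by
    rw [degMatrix_mulVec_ket, degree_apply_eq_card_sub_two hG, ofReal_natCast]
  have hDsub : G.degMatrix ℂ *ᵥ ((ket (a 0) - ket (a 2)) - (ket (a 1) - ket (a 3))) =
      (d : ℂ) • ((ket (a 0) - ket (a 2)) - (ket (a 1) - ket (a 3))) := by
    simp only [mulVec_sub, hD, smul_sub]
  have hDadd : G.degMatrix ℂ *ᵥ ((ket (a 0) - ket (a 2)) + (ket (a 1) - ket (a 3))) =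
      (d : ℂ) • ((ket (a 0) - ket (a 2)) + (ket (a 1) - ket (a 3))) := by
    simp only [mulVec_add, mulVec_sub, hD, smul_add, smul_sub]
  have hAsub := adjMatrix_mulVec_eq_zero hG
  have hAadd := adjMatrix_mulVec_eq_neg_two_smul hG
  rintro M (rfl | rfl | rfl)
  · refine exists_U_pi_div_two_mulVec_eq_smul _ (μ := 0) (ν := -2) 0 ?_ ?_ (by norm_num)
    · rw [adjMatrix_map_ofReal, hAsub, ofReal_zero, zero_smul]
    · rw [adjMatrix_map_ofReal, hAadd]; norm_num
  · refine exists_U_pi_div_two_mulVec_eq_smul _ (μ := d) (ν := d + 2) (-1) ?_ ?_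
      (by push_cast; ring)
    · rw [lapMatrix_map_ofReal, sub_mulVec, hDsub, hAsub, sub_zero]
    · rw [lapMatrix_map_ofReal, sub_mulVec, hDadd, hAadd, ← sub_smul]
      congr 1; push_cast; ring
  · refine exists_U_pi_div_two_mulVec_eq_smul _ (μ := d) (ν := d - 2) 0 ?_ ?_
      (by push_cast; ring)
    · rw [degMatrix_add_adjMatrix_map_ofReal, add_mulVec, hDsub, hAsub, add_zero]
    · rw [degMatrix_add_adjMatrix_map_ofReal, add_mulVec, hDadd, hAadd, ← add_smul]
      congr 1; push_cast; ring

end SimpleGraph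

/-- For `n ≥ 4`, deleting the disjoint edges `{0,1}` and `{2,3}` from
`K_n` yields a graph with pair state transfer between `e₀ − e₂` and `e₁ − e₃` at
time `π/2` relative to each of `A`, `L` and `Q`. -/
theorem stmt5 (n : ℕ) (hn : 4 ≤ n)
    (G : SimpleGraph (Fin n)) [DecidableRel G.Adj]
    (hG : ∀ u v : Fin n, G.Adj u v ↔
      (u ≠ v ∧
        ({u, v} : Set (Fin n)) ≠ {⟨0, by omega⟩, ⟨1, by omega⟩} ∧
        ({u, v} : Set (Fin n)) ≠ {⟨2, by omega⟩, ⟨3, by omega⟩})) :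
    ∀ M ∈ ({G.adjMatrix ℝ, G.lapMatrix ℝ, G.degMatrix ℝ + G.adjMatrix ℝ} :
        Set (Matrix (Fin n) (Fin n) ℝ)),
      ∃ γ : ℂ, ‖γ‖ = 1 ∧
        U M (Real.pi / 2) *ᵥ (ket (⟨0, by omega⟩ : Fin n) - ket ⟨2, by omega⟩) =
          γ • (ket (⟨1, by omega⟩ : Fin n) - ket ⟨3, by omega⟩) := by
  have hG_sdiff : G = ⊤ \ SimpleGraph.fromEdgeSet
      {s(⟨0, by omega⟩, ⟨1, by omega⟩), s(⟨2, by omega⟩, ⟨3, by omega⟩)} := by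
    ext u v
    rw [hG]
    simp [Set.pair_eq_pair_iff]
    tauto
  -- `Fin.castLEEmb hn k` is definitionally `⟨k, _⟩`.
  exact G.exists_pair_state_transfer (a := Fin.castLEEmb hn) hG_sdiff
end

section
/- Let A₁ be a real symmetric c×c matrix with A₁·𝟙 = k·𝟙 for some k ∈ ℝ, let A₂ be a real symmetric m×m matrix, and let N = [[A₁, J], [Jᵀ, A₂]] be the (c+m)×(c+m) block matrix, where J is the c×m all-ones matrix (N is the adjacency matrix of the join G₁ ∨ G₂ when A₁, A₂ are adjacency matrices of graphs G₁, G₂ with G₁ regular). If x, y ∈ ℝ^c satisfy 𝟙ᵀx = 𝟙ᵀy = 0 and exp(i·τ·A₁)·x = γ·y for some τ > 0 and γ ∈ ℂ with |γ| = 1, then exp(i·τ·N)·(x, 0) = γ·(y, 0). -/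
open Matrix

/-!
The vectors `(v, 0)` with `𝟙ᵀv = 0` span an `N`-invariant subspace on which `N` acts as
`A₁`: the all-ones blocks annihilate `v`, and a symmetric `A₁` with constant row sums has
constant column sums, so it preserves `𝟙ᵀv = 0`. Hence every power of `iτN` acts on `(x, 0)`
as the same power of `iτA₁` acts on `x`, and summing the exponential series gives the claim.
-/

open Set
open scoped Nat

namespace Matrix

variable {ι κ : Type*} [Fintype ι] [Fintype κ]

theorem pow_mulVec_mulVec_of_mapsTo {R : Type*} [Semiring R]
    [DecidableEq ι] [DecidableEq κ] {M : Matrix ι ι R} {B : Matrix κ κ R} {X : Matrix ι κ R}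
    {S : Set (κ → R)}
    (hS : MapsTo (B *ᵥ ·) S S) (h : ∀ v ∈ S, M *ᵥ (X *ᵥ v) = X *ᵥ (B *ᵥ v)) (n : ℕ) :
    ∀ v ∈ S, M ^ n *ᵥ (X *ᵥ v) = X *ᵥ (B ^ n *ᵥ v) := by
  induction n with
  | zero => simp
  | succ n ih =>
    intro v hv
    rw [pow_succ, pow_succ, ← mulVec_mulVec, ← mulVec_mulVec, h v hv, ih _ (hS hv)]

theorem exp_mulVec_mulVec_of_mapsTo {𝕂 : Type*} [RCLike 𝕂]
    [DecidableEq ι] [DecidableEq κ] {M : Matrix ι ι 𝕂} {B : Matrix κ κ 𝕂} {X : Matrix ι κ 𝕂}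
    {S : Set (κ → 𝕂)}
    (hS : MapsTo (B *ᵥ ·) S S) (h : ∀ v ∈ S, M *ᵥ (X *ᵥ v) = X *ᵥ (B *ᵥ v))
    {v : κ → 𝕂} (hv : v ∈ S) :
    NormedSpace.exp M *ᵥ (X *ᵥ v) = X *ᵥ (NormedSpace.exp B *ᵥ v) := by
  open scoped Norms.Operator in
  have hM := (NormedSpace.exp_series_hasSum_exp' (𝕂 := 𝕂) M).map
    (mulVec.addMonoidHomLeft (X *ᵥ v)) (continuous_id.matrix_mulVec continuous_const)
  have hB := ((NormedSpace.exp_series_hasSum_exp' (𝕂 := 𝕂) B).map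
    (mulVec.addMonoidHomLeft v) (continuous_id.matrix_mulVec continuous_const)).map
    X.mulVecLin (continuous_const.matrix_mulVec continuous_id)
  refine hM.unique (hB.congr_fun fun n => ?_)
  change ((n !⁻¹ : 𝕂) • M ^ n) *ᵥ (X *ᵥ v) = X *ᵥ (((n !⁻¹ : 𝕂) • B ^ n) *ᵥ v)
  rw [smul_mulVec, smul_mulVec, mulVec_smul, pow_mulVec_mulVec_of_mapsTo hS h n v hv]

theorem IsSymm.sum_mulVec_eq_zero {R : Type*} [CommSemiring R] {A : Matrix κ κ R}
    (hA : A.IsSymm) {k : R} (hreg : A *ᵥ 1 = k • 1) {v : κ → R} (hv : ∑ i, v i = 0) :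
    ∑ i, (A *ᵥ v) i = 0 := by
  have hcol : 1 ᵥ* A = k • 1 := by rw [← mulVec_transpose, hA.eq, hreg]
  calc ∑ i, (A *ᵥ v) i = 1 ⬝ᵥ (A *ᵥ v) := (one_dotProduct _).symm
    _ = k * ∑ i, v i := by
      rw [dotProduct_mulVec, hcol, smul_dotProduct, one_dotProduct, smul_eq_mul]
    _ = 0 := by rw [hv, mul_zero]

theorem fromBlocks_ones_mulVec_sumElim_zero {R : Type*} [NonAssocSemiring R]
    (A₁ : Matrix ι ι R) (A₂ : Matrix κ κ R) {v : ι → R} (hv : ∑ i, v i = 0) :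
    fromBlocks A₁ (of fun _ _ => 1) (of fun (_ : ι) (_ : κ) => 1)ᵀ A₂ *ᵥ Sum.elim v 0 =
      Sum.elim (A₁ *ᵥ v) 0 := by
  ext (i | j) <;> simp [mulVec, dotProduct, hv]

end Matrix

theorem stmt9_general (c m : ℕ)
    (A₁ : Matrix (Fin c) (Fin c) ℝ) (hA₁ : A₁.IsSymm)
    (k : ℝ) (hreg : A₁ *ᵥ (fun _ => (1 : ℝ)) = k • fun _ => (1 : ℝ))
    (A₂ : Matrix (Fin m) (Fin m) ℝ)
    (N : Matrix (Fin c ⊕ Fin m) (Fin c ⊕ Fin m) ℝ)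
    (hN : N = Matrix.fromBlocks A₁ (Matrix.of fun _ _ => (1 : ℝ))
      (Matrix.of fun (_ : Fin c) (_ : Fin m) => (1 : ℝ))ᵀ A₂)
    (x y : Fin c → ℝ) (hx : ∑ i, x i = 0)
    (τ : ℝ) (γ : ℂ)
    (hPST : U A₁ τ *ᵥ (fun i => (x i : ℂ)) = γ • fun i => (y i : ℂ)) :
    U N τ *ᵥ Sum.elim (fun i => (x i : ℂ)) 0 =
      γ • Sum.elim (fun i => (y i : ℂ)) 0 := by
  set s : ℂ := Complex.I * τ
  set B : Matrix (Fin c) (Fin c) ℂ := s • A₁.map (↑)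
  let S : Set (Fin c → ℂ) := {v | ∑ i, v i = 0}
  let X : Matrix (Fin c ⊕ Fin m) (Fin c) ℂ := fromRows 1 0
  have hX (v : Fin c → ℂ) : X *ᵥ v = Sum.elim v 0 := by simp [X]
  have hBS : MapsTo (B *ᵥ ·) S S := by
    have hBreg : B *ᵥ 1 = (s * k) • 1 := by
      ext i
      simpa [B, mulVec, dotProduct, mul_assoc, Finset.mul_sum] using
        congrArg (fun r : ℝ => s * r) (congrFun hreg i)
    exact fun v hv => ((hA₁.map _).smul s).sum_mulVec_eq_zero hBreg hv
  have hNℂ : N.map ((↑) : ℝ → ℂ) =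
      fromBlocks (A₁.map (↑)) (of fun _ _ => 1) (of fun _ _ => 1)ᵀ (A₂.map (↑)) := by
    subst hN
    ext (i | i) (j | j) <;> simp
  have hNB : ∀ v ∈ S, (s • N.map (↑)) *ᵥ (X *ᵥ v) = X *ᵥ (B *ᵥ v) := by
    intro v hv
    rw [hX, hX, hNℂ, smul_mulVec, fromBlocks_ones_mulVec_sumElim_zero _ _ hv]
    ext (i | j) <;> simp [B, smul_mulVec]
  have hxS : (fun i => (x i : ℂ)) ∈ S := by simp [S, ← Complex.ofReal_sum, hx]
  calc U N τ *ᵥ Sum.elim (fun i => (x i : ℂ)) 0 = X *ᵥ (U A₁ τ *ᵥ fun i => (x i : ℂ)) := by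
        rw [← hX]
        exact exp_mulVec_mulVec_of_mapsTo hBS hNB hxS
    _ = γ • Sum.elim (fun i => (y i : ℂ)) 0 := by
        rw [hPST, hX]
        ext (i | j) <;> simp

/-- Let `N = [[A₁, J], [Jᵀ, A₂]]` (the adjacency matrix of a join with
regular first summand, `A₁·𝟙 = k·𝟙`). If `x, y ∈ ℝ^c` satisfy `𝟙ᵀx = 𝟙ᵀy = 0` and
`exp(iτA₁)·x = γ·y` with `τ > 0`, `|γ| = 1`, then `exp(iτN)·(x,0) = γ·(y,0)`. -/
theorem stmt9 (c m : ℕ)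
    (A₁ : Matrix (Fin c) (Fin c) ℝ) (hA₁ : A₁.IsSymm)
    (k : ℝ) (hreg : A₁ *ᵥ (fun _ => (1 : ℝ)) = k • fun _ => (1 : ℝ))
    (A₂ : Matrix (Fin m) (Fin m) ℝ) (hA₂ : A₂.IsSymm)
    (N : Matrix (Fin c ⊕ Fin m) (Fin c ⊕ Fin m) ℝ)
    (hN : N = Matrix.fromBlocks A₁ (Matrix.of fun _ _ => (1 : ℝ))
      (Matrix.of fun (_ : Fin c) (_ : Fin m) => (1 : ℝ))ᵀ A₂)
    (x y : Fin c → ℝ) (hx : ∑ i, x i = 0) (hy : ∑ i, y i = 0)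
    (τ : ℝ) (hτ : 0 < τ) (γ : ℂ) (hγ : ‖γ‖ = 1)
    (hPST : U A₁ τ *ᵥ (fun i => (x i : ℂ)) = γ • fun i => (y i : ℂ)) :
    U N τ *ᵥ Sum.elim (fun i => (x i : ℂ)) 0 =
      γ • Sum.elim (fun i => (y i : ℂ)) 0 :=
  stmt9_general c m A₁ hA₁ k hreg A₂ N hN x y hx τ γ hPST
end

section
/- Let L₁ be the Laplacian matrix of a graph on c vertices and L₂ the Laplacian matrix of a graph on m vertices, and let N = [[L₁ + m·I_c, −J], [−Jᵀ, L₂ + c·I_m]], where J is the c×m all-ones matrix (N is the Laplacian matrix of the join of the two graphs). If x, y ∈ ℝ^c satisfy 𝟙ᵀx = 𝟙ᵀy = 0 and exp(i·τ·L₁)·x = γ·y for some τ > 0 and γ ∈ ℂ with |γ| = 1, then there exists γ' ∈ ℂ with |γ'| = 1 (namely γ' = e^{imτ}·γ) such that exp(i·τ·N)·(x, 0) = γ'·(y, 0). In particular, Laplacian pair state transfer in a summand orthogonal to 𝟙 persists in the join at the same time. -/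
/-!
On vectors `(v, 0)` with `𝟙ᵀv = 0` the all-ones block `-Jᵀ` vanishes, so the join Laplacian `N`
acts as `L₁ + m·I`, which maps such vectors to such vectors because `L₁` has zero column sums.
Hence `exp(iτN)(x, 0) = (exp(iτ(L₁ + m·I)) x, 0)`, and `exp(iτ(L₁ + m·I)) = e^{imτ} exp(iτL₁)`
since `m·I` is central.
-/

open Matrix

open NormedSpace
open scoped Nat

namespace SimpleGraph

variable {V : Type*} [Fintype V] [DecidableEq V] (G : SimpleGraph V) [DecidableRel G.Adj]

theorem lapMatrix_map {R S : Type*} [Ring R] [Ring S] (f : R →+* S) :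
    (G.lapMatrix R).map f = G.lapMatrix S := by
  ext i j
  by_cases h : i = j <;> by_cases h' : G.Adj i j <;>
    simp [lapMatrix, degMatrix, adjMatrix_apply, h, h']

theorem sum_lapMatrix_mulVec {R : Type*} [CommRing R] (v : V → R) :
    ∑ i, (G.lapMatrix R *ᵥ v) i = 0 := by
  rw [← one_dotProduct, dotProduct_mulVec, ← mulVec_transpose, (G.isSymm_lapMatrix (R := R)).eq,
    show (1 : V → R) = fun _ => 1 from rfl, G.lapMatrix_mulVec_const_eq_zero, zero_dotProduct]

end SimpleGraph

theorem Matrix.fromBlocks_mulVec_sumElim_zero {α β R : Type*} [Fintype α] [Fintype β] [Ring R]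
    (A : Matrix α α R) (B : Matrix α β R) (D : Matrix β β R) {v : α → R} (hv : ∑ i, v i = 0) :
    fromBlocks A B (-(of fun (_ : α) (_ : β) => (1 : R))ᵀ) D *ᵥ Sum.elim v 0 =
      Sum.elim (A *ᵥ v) 0 := by
  rw [fromBlocks_mulVec]
  ext (i | j) <;> simp [mulVec, dotProduct, hv]

section Exp

attribute [local instance] Matrix.linftyOpNormedRing Matrix.linftyOpNormedAlgebra

variable {𝕂 : Type*} [RCLike 𝕂] {n n' : Type*} [Fintype n] [DecidableEq n]
  [Fintype n'] [DecidableEq n']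

theorem Matrix.hasSum_exp_mulVec (A : Matrix n n 𝕂) (w : n → 𝕂) :
    HasSum (fun k => (k !⁻¹ : 𝕂) • (A ^ k *ᵥ w)) (exp A *ᵥ w) := by
  have := (exp_series_hasSum_exp' (𝕂 := 𝕂) A).map (mulVec.addMonoidHomLeft w)
    (continuous_id.matrix_mulVec continuous_const)
  convert this using 1
  · funext k
    exact (smul_mulVec _ _ _).symm
  · rfl

theorem Matrix.exp_mulVec_of_intertwine {A : Matrix n' n' 𝕂} {B : Matrix n n 𝕂}
    (ι : (n → 𝕂) →ₗ[𝕂] (n' → 𝕂)) {S : Set (n → 𝕂)} (hBS : ∀ v ∈ S, B *ᵥ v ∈ S)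
    (hAB : ∀ v ∈ S, A *ᵥ ι v = ι (B *ᵥ v)) {v : n → 𝕂} (hv : v ∈ S) :
    exp A *ᵥ ι v = ι (exp B *ᵥ v) := by
  have hpow : ∀ k : ℕ, B ^ k *ᵥ v ∈ S ∧ A ^ k *ᵥ ι v = ι (B ^ k *ᵥ v) := by
    intro k
    induction k with
    | zero => simpa using hv
    | succ k ih =>
      rw [pow_succ', pow_succ', ← mulVec_mulVec, ← mulVec_mulVec, ih.2]
      exact ⟨hBS _ ih.1, hAB _ ih.1⟩
  have hι : Continuous ι := ι.continuous_of_finiteDimensional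
  refine (hasSum_exp_mulVec A (ι v)).unique ?_
  simpa [Function.comp_def, hpow] using (hasSum_exp_mulVec B v).map ι hι

theorem Matrix.exp_smul_one (z : 𝕂) : exp (z • (1 : Matrix n n 𝕂)) = exp z • 1 := by
  have h := (algebraMap_exp_comm (𝔸 := Matrix n n 𝕂) z).symm
  rw [Algebra.algebraMap_eq_smul_one, Algebra.algebraMap_eq_smul_one] at h
  exact h

theorem Matrix.exp_smul_fromBlocks_mulVec_sumElim_zero {α β : Type*} [Fintype α] [DecidableEq α]
    [Fintype β] [DecidableEq β] (A : Matrix α α 𝕂) (hA : ∀ v, ∑ i, v i = 0 → ∑ i, (A *ᵥ v) i = 0)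
    (B : Matrix α β 𝕂) (D : Matrix β β 𝕂) (z : 𝕂) {v : α → 𝕂} (hv : ∑ i, v i = 0) :
    exp (z • fromBlocks A B (-(of fun (_ : α) (_ : β) => (1 : 𝕂))ᵀ) D) *ᵥ Sum.elim v 0 =
      Sum.elim (exp (z • A) *ᵥ v) 0 := by
  let ι : (α → 𝕂) →ₗ[𝕂] (α ⊕ β → 𝕂) :=
    (LinearEquiv.sumPiEquivProdPi 𝕂 α β fun _ => 𝕂).symm.toLinearMap ∘ₗ LinearMap.inl 𝕂 _ _
  refine exp_mulVec_of_intertwine ι (S := {v | ∑ i, v i = 0}) ?_ ?_ hv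
  · intro w hw
    simp [smul_mulVec, ← Finset.mul_sum, hA w hw]
  · intro w hw
    show _ *ᵥ Sum.elim w 0 = Sum.elim ((z • A) *ᵥ w) 0
    rw [smul_mulVec, smul_mulVec, fromBlocks_mulVec_sumElim_zero A B D hw]
    ext (i | j) <;> simp

theorem U_add_smul_one {ι : Type*} [Fintype ι] [DecidableEq ι] (R : Matrix ι ι ℝ) (a t : ℝ) :
    U (R + a • 1) t = Complex.exp (Complex.I * a * t) • U R t := by
  have hsplit : (Complex.I * t) • (R + a • 1).map (Complex.ofReal ·) =
      (Complex.I * t) • R.map (Complex.ofReal ·) + (Complex.I * a * t) • 1 := by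
    ext i j
    by_cases h : i = j <;> simp [one_apply, h]
    ring
  rw [U, hsplit, Matrix.exp_add_of_commute _ _ ((Commute.one_right _).smul_right _),
    Matrix.exp_smul_one, ← Complex.exp_eq_exp_ℂ, mul_smul_one, U]

end Exp

theorem stmt10_general (c m : ℕ)
    (G₁ : SimpleGraph (Fin c)) [DecidableRel G₁.Adj]
    (L₁ : Matrix (Fin c) (Fin c) ℝ) (hL₁ : L₁ = G₁.lapMatrix ℝ)
    (L₂ : Matrix (Fin m) (Fin m) ℝ)
    (N : Matrix (Fin c ⊕ Fin m) (Fin c ⊕ Fin m) ℝ)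
    (hN : N = Matrix.fromBlocks
      (L₁ + (m : ℝ) • (1 : Matrix (Fin c) (Fin c) ℝ))
      (-(Matrix.of fun (_ : Fin c) (_ : Fin m) => (1 : ℝ)))
      (-(Matrix.of fun (_ : Fin c) (_ : Fin m) => (1 : ℝ))ᵀ)
      (L₂ + (c : ℝ) • (1 : Matrix (Fin m) (Fin m) ℝ)))
    (x y : Fin c → ℝ) (hx : ∑ i, x i = 0)
    (τ : ℝ) (γ : ℂ) (hγ : ‖γ‖ = 1)
    (hPST : U L₁ τ *ᵥ (fun i => (x i : ℂ)) = γ • fun i => (y i : ℂ)) :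
    ∃ γ' : ℂ, γ' = Complex.exp (Complex.I * m * τ) * γ ∧ ‖γ'‖ = 1 ∧
      U N τ *ᵥ Sum.elim (fun i => (x i : ℂ)) 0 =
        γ' • Sum.elim (fun i => (y i : ℂ)) 0 := by
  refine ⟨_, rfl, ?_, ?_⟩
  · rw [norm_mul, hγ, mul_one, show Complex.I * m * τ = ((m * τ : ℝ) : ℂ) * Complex.I by
      push_cast; ring]
    exact Complex.norm_exp_ofReal_mul_I _
  have hmap : (L₁ + (m : ℝ) • 1).map (Complex.ofReal ·) = G₁.lapMatrix ℂ + (m : ℂ) • 1 := by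
    rw [hL₁, ← G₁.lapMatrix_map Complex.ofRealHom]
    ext i j
    by_cases h : i = j <;> simp [one_apply, h]
  have hones : (-(of fun (_ : Fin c) (_ : Fin m) => (1 : ℝ))ᵀ).map (Complex.ofReal ·) =
      -(of fun (_ : Fin c) (_ : Fin m) => (1 : ℂ))ᵀ := by
    ext
    simp
  have hsum : ∀ v : Fin c → ℂ, ∑ i, v i = 0 →
      ∑ i, ((L₁ + (m : ℝ) • 1).map (Complex.ofReal ·) *ᵥ v) i = 0 := by
    intro v hv
    simp [hmap, add_mulVec, smul_mulVec, Finset.sum_add_distrib, ← Finset.mul_sum, hv,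
      G₁.sum_lapMatrix_mulVec]
  have hxC : ∑ i, (x i : ℂ) = 0 := by exact_mod_cast hx
  rw [U, hN, fromBlocks_map, hones, exp_smul_fromBlocks_mulVec_sumElim_zero _ hsum _ _ _ hxC]
  change Sum.elim (U (L₁ + (m : ℝ) • 1) τ *ᵥ _) 0 = _
  rw [U_add_smul_one, smul_mulVec, hPST, smul_smul]
  ext (i | j) <;> simp

/-- Let `L₁, L₂` be Laplacians of graphs on `c` and `m` vertices and
`N = [[L₁ + m·I, −J], [−Jᵀ, L₂ + c·I]]` the Laplacian of their join. If
`𝟙ᵀx = 𝟙ᵀy = 0` and `exp(iτL₁)·x = γ·y` with `τ > 0`, `|γ| = 1`, then with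
`γ' = e^{imτ}·γ` (which is unimodular) we have `exp(iτN)·(x,0) = γ'·(y,0)`. -/
theorem stmt10 (c m : ℕ)
    (G₁ : SimpleGraph (Fin c)) [DecidableRel G₁.Adj]
    (G₂ : SimpleGraph (Fin m)) [DecidableRel G₂.Adj]
    (L₁ : Matrix (Fin c) (Fin c) ℝ) (hL₁ : L₁ = G₁.lapMatrix ℝ)
    (L₂ : Matrix (Fin m) (Fin m) ℝ) (hL₂ : L₂ = G₂.lapMatrix ℝ)
    (N : Matrix (Fin c ⊕ Fin m) (Fin c ⊕ Fin m) ℝ)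
    (hN : N = Matrix.fromBlocks
      (L₁ + (m : ℝ) • (1 : Matrix (Fin c) (Fin c) ℝ))
      (-(Matrix.of fun (_ : Fin c) (_ : Fin m) => (1 : ℝ)))
      (-(Matrix.of fun (_ : Fin c) (_ : Fin m) => (1 : ℝ))ᵀ)
      (L₂ + (c : ℝ) • (1 : Matrix (Fin m) (Fin m) ℝ)))
    (x y : Fin c → ℝ) (hx : ∑ i, x i = 0) (hy : ∑ i, y i = 0)
    (τ : ℝ) (hτ : 0 < τ) (γ : ℂ) (hγ : ‖γ‖ = 1)
    (hPST : U L₁ τ *ᵥ (fun i => (x i : ℂ)) = γ • fun i => (y i : ℂ)) :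
    ∃ γ' : ℂ, γ' = Complex.exp (Complex.I * m * τ) * γ ∧ ‖γ'‖ = 1 ∧
      U N τ *ᵥ Sum.elim (fun i => (x i : ℂ)) 0 =
        γ' • Sum.elim (fun i => (y i : ℂ)) 0 :=
  stmt10_general c m G₁ L₁ hL₁ L₂ N hN x y hx τ γ hγ hPST
end

section
/- Let M be a real symmetric c×c matrix with M·𝟙 = μ·𝟙, let β, η ∈ ℝ, and let M' = β·I_c + η·J − M, where J is the c×c all-ones matrix. Then for every x ∈ ℝ^c with 𝟙ᵀx = 0 and every t ∈ ℝ, exp(i·t·M') · x = e^{iβt} · ( exp(−i·t·M) · x ). (Taking (β, η) = (−1, 1), (c+1, −1), (c−1, 1) recovers the relation between the transition matrices of a graph and its complement relative to the adjacency, Laplacian, and signless Laplacian matrices, respectively.) -/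
open Matrix

/-!
On `𝟙^⊥` the all-ones matrix `J` acts as `0`, so `M' = β I + η J − M` acts there as `β − M`.
Since `M` has constant row sums and is symmetric, its column sums are constant too, so `J`
commutes with `M`; hence `exp(itM') = exp(−itM) · exp(it(βI + ηJ))`, and the second factor
fixes `x ∈ 𝟙^⊥` up to the scalar `e^{iβt}`.
-/

attribute [local instance] Matrix.linftyOpNormedRing Matrix.linftyOpNormedAlgebra

namespace Matrix

variable {n R 𝕂 : Type*} [Fintype n]

theorem commute_of_mulVec_one_eq_of_vecMul_one_eq [CommSemiring R]
    {M : Matrix n n R} {μ : R}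
    (hrow : M *ᵥ (fun _ => 1) = μ • fun _ => 1) (hcol : (fun _ => 1) ᵥ* M = μ • fun _ => 1) :
    Commute (of fun (_ _ : n) => (1 : R)) M := by
  ext i j
  have hi := congrFun hrow i
  have hj := congrFun hcol j
  simp only [mulVec, vecMul, dotProduct, one_mul, mul_one] at hi hj
  simp only [mul_apply, of_apply, one_mul, mul_one, hi, hj, Pi.smul_apply]

theorem pow_mulVec_of_mulVec_eq_smul [DecidableEq n] [CommSemiring R] {S : Matrix n n R}
    {v : n → R} {a : R} (h : S *ᵥ v = a • v) (k : ℕ) : S ^ k *ᵥ v = a ^ k • v := by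
  induction k with
  | zero => simp
  | succ k ih =>
    rw [pow_succ, ← mulVec_mulVec, h, mulVec_smul, ih, smul_smul, pow_succ, mul_comm]

section Exp

variable [DecidableEq n] [RCLike 𝕂]

theorem exp_mulVec_of_mulVec_eq_smul_s11 {S : Matrix n n 𝕂} {v : n → 𝕂} {a : 𝕂}
    (h : S *ᵥ v = a • v) : NormedSpace.exp S *ᵥ v = NormedSpace.exp a • v := by
  let F : Matrix n n 𝕂 →ₗ[𝕂] n → 𝕂 := (mulVecBilin 𝕂 𝕂).flip v
  have hS := (NormedSpace.exp_series_hasSum_exp' (𝕂 := 𝕂) S).map F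
    (LinearMap.continuous_of_finiteDimensional F)
  have ha := (NormedSpace.exp_series_hasSum_exp' (𝕂 := 𝕂) a).smul_const v
  refine hS.unique (ha.congr_fun fun k => ?_)
  simp [F, mulVecBilin_apply, pow_mulVec_of_mulVec_eq_smul h, smul_smul]

theorem exp_add_mulVec_of_commute {A B : Matrix n n 𝕂} (hAB : Commute A B) {v : n → 𝕂}
    {a : 𝕂} (hA : A *ᵥ v = a • v) :
    NormedSpace.exp (A + B) *ᵥ v = NormedSpace.exp a • (NormedSpace.exp B *ᵥ v) := by
  rw [add_comm, exp_add_of_commute B A hAB.symm, ← mulVec_mulVec,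
    exp_mulVec_of_mulVec_eq_smul_s11 hA, mulVec_smul]

theorem exp_smul_complement_mulVec {M : Matrix n n 𝕂}
    (hJM : Commute (of fun (_ _ : n) => (1 : 𝕂)) M) {v : n → 𝕂} (hv : ∑ i, v i = 0)
    (s β η : 𝕂) :
    NormedSpace.exp (s • (β • 1 + η • of (fun _ _ => 1) - M)) *ᵥ v =
      NormedSpace.exp (s * β) • (NormedSpace.exp ((-s) • M) *ᵥ v) := by
  have hJv : of (fun (_ _ : n) => (1 : 𝕂)) *ᵥ v = 0 := by
    ext i
    simp [mulVec, dotProduct, hv]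
  have hA : (s • (β • 1 + η • of fun (_ _ : n) => (1 : 𝕂))) *ᵥ v = (s * β) • v := by
    simp only [smul_add, add_mulVec, smul_mulVec, one_mulVec, hJv, smul_zero, add_zero, smul_smul]
  have hAB : Commute (s • (β • 1 + η • of fun (_ _ : n) => (1 : 𝕂))) ((-s) • M) :=
    (((Commute.one_left M).smul_left β).add_left (hJM.smul_left η)).smul_left s |>.smul_right _
  rw [← exp_add_mulVec_of_commute hAB hA, neg_smul, ← sub_eq_add_neg, ← smul_sub]

end Exp

end Matrix

/-- Let `M` be real symmetric with `M·𝟙 = μ·𝟙` and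
`M' = β·I + η·J − M`. Then for every `x` with `𝟙ᵀx = 0` and every `t ∈ ℝ`,
`exp(itM')·x = e^{iβt}·(exp(−itM)·x)`. -/
theorem stmt11 (c : ℕ)
    (M : Matrix (Fin c) (Fin c) ℝ) (hM : M.IsSymm)
    (μ : ℝ) (hμ : M *ᵥ (fun _ => (1 : ℝ)) = μ • fun _ => (1 : ℝ))
    (β η : ℝ)
    (M' : Matrix (Fin c) (Fin c) ℝ)
    (hM' : M' = β • (1 : Matrix (Fin c) (Fin c) ℝ) +
      η • (Matrix.of fun (_ : Fin c) (_ : Fin c) => (1 : ℝ)) - M) :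
    ∀ x : Fin c → ℝ, (∑ i, x i = 0) → ∀ t : ℝ,
      U M' t *ᵥ (fun i => (x i : ℂ)) =
        Complex.exp (Complex.I * β * t) • (U M (-t) *ᵥ fun i => (x i : ℂ)) := by
  intro x hx t
  have hcol : (fun _ => (1 : ℝ)) ᵥ* M = μ • fun _ => 1 := by
    rw [← mulVec_transpose, hM.eq, hμ]
  have hJM : Commute (of fun (_ _ : Fin c) => (1 : ℂ)) (M.map (Complex.ofReal ·)) := by
    have h := (commute_of_mulVec_one_eq_of_vecMul_one_eq hμ hcol).map Complex.ofRealHom.mapMatrix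
    have hJ : (of fun (_ _ : Fin c) => (1 : ℝ)).map Complex.ofRealHom = of fun _ _ => 1 := by
      ext; simp
    rwa [RingHom.mapMatrix_apply, RingHom.mapMatrix_apply, hJ] at h
  have hM'ℂ : M'.map (Complex.ofReal ·) =
      (β : ℂ) • 1 + (η : ℂ) • of (fun _ _ => 1) - M.map (Complex.ofReal ·) := by
    subst hM'
    ext i j
    by_cases h : i = j <;> simp [h]
  rw [U, U, hM'ℂ, exp_smul_complement_mulVec hJM (by exact_mod_cast hx), Complex.exp_eq_exp_ℂ,
    Complex.ofReal_neg, mul_neg, mul_right_comm]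
end

section
/- Let G be a k-regular simple graph on c vertices with complement Gᶜ, and let x, y ∈ ℝ^c with 𝟙ᵀx = 𝟙ᵀy = 0, and let τ > 0. Then there exists γ ∈ ℂ with |γ| = 1 such that exp(i·τ·A(G))·x = γ·y if and only if there exists γ' ∈ ℂ with |γ'| = 1 such that exp(i·τ·A(Gᶜ))·x = γ'·y. That is, perfect state transfer between real states orthogonal to 𝟙 occurs in G at time τ if and only if it occurs in Gᶜ at time τ. -/
open Matrix

namespace PSTAux
open scoped Nat

/-- If `x` is in the kernel of `M`, then `exp M` fixes `x`. -/
lemma exp_mulVec_of_ker {n : Type*} [Fintype n] [DecidableEq n]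
    (M : Matrix n n ℂ) (x : n → ℂ) (h : M *ᵥ x = 0) :
    NormedSpace.exp M *ᵥ x = x := by
  letI : NormedRing (Matrix n n ℂ) := Matrix.linftyOpNormedRing
  letI : NormedAlgebra ℂ (Matrix n n ℂ) := Matrix.linftyOpNormedAlgebra
  let Tl : Matrix n n ℂ →ₗ[ℂ] (n → ℂ) :=
    { toFun := fun A => A *ᵥ x
      map_add' := fun A B => Matrix.add_mulVec A B x
      map_smul' := fun c A => Matrix.smul_mulVec c A x }
  let T : Matrix n n ℂ →L[ℂ] (n → ℂ) := LinearMap.toContinuousLinearMap Tl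
  have hs : Summable fun k : ℕ => ((k ! : ℂ))⁻¹ • M ^ k :=
    NormedSpace.expSeries_summable' (𝕂 := ℂ) M
  have h1 : NormedSpace.exp M *ᵥ x = T (∑' k : ℕ, ((k ! : ℂ))⁻¹ • M ^ k) := by
    rw [NormedSpace.exp_eq_tsum (𝕂 := ℂ)]
    rfl
  rw [h1, T.map_tsum hs]
  have h2 : ∀ k : ℕ, T (((k ! : ℂ))⁻¹ • M ^ k) = if k = 0 then x else 0 := by
    intro k
    cases k with
    | zero => simp [T, Tl, Matrix.one_mulVec]
    | succ m =>
      have hz : M ^ (m + 1) *ᵥ x = 0 := by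
        rw [pow_succ, ← Matrix.mulVec_mulVec, h, Matrix.mulVec_zero]
      simp [T, Tl, Matrix.smul_mulVec, hz]
  simp_rw [h2]
  exact tsum_ite_eq 0 (fun _ => x)

lemma exp_smul_one {n : Type*} [Fintype n] [DecidableEq n] (w : ℂ) :
    NormedSpace.exp (w • (1 : Matrix n n ℂ)) = Complex.exp w • 1 := by
  letI : NormedRing (Matrix n n ℂ) := Matrix.linftyOpNormedRing
  letI : NormedAlgebra ℂ (Matrix n n ℂ) := Matrix.linftyOpNormedAlgebra
  rw [show w • (1 : Matrix n n ℂ) = algebraMap ℂ _ w from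
      (Algebra.algebraMap_eq_smul_one w).symm]
  erw [← NormedSpace.algebraMap_exp_comm]
  rw [Complex.exp_eq_exp_ℂ, Algebra.algebraMap_eq_smul_one]

variable {c : ℕ}

lemma adjMatrix_map_ofReal (G : SimpleGraph (Fin c)) [DecidableRel G.Adj] :
    (G.adjMatrix ℝ).map (Complex.ofReal ·) = G.adjMatrix ℂ := by
  ext i j
  simp [Matrix.map_apply, apply_ite (Complex.ofReal ·)]

lemma compl_adjMatrix_eq (G H : SimpleGraph (Fin c)) [DecidableRel G.Adj]
    [DecidableRel H.Adj] (hH : H = Gᶜ) :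
    H.adjMatrix ℂ = (Matrix.of fun _ _ => (1 : ℂ)) - 1 - G.adjMatrix ℂ := by
  ext i j
  have hadj : H.Adj i j ↔ i ≠ j ∧ ¬ G.Adj i j := by
    rw [hH]; exact G.compl_adj i j
  by_cases hij : i = j
  · subst hij
    simp [hadj, Matrix.one_apply]
  · by_cases h : G.Adj i j <;>
      simp [hadj, hij, h, Matrix.one_apply, Matrix.one_apply_ne hij]

/-- One direction of statement 12, with the complement graph abstracted as `H`
to avoid instance juggling on `Gᶜᶜ`. -/
lemma pst_compl (G H : SimpleGraph (Fin c)) [DecidableRel G.Adj]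
    [DecidableRel H.Adj] (hH : H = Gᶜ) {μ : ℂ}
    (hrow : ∀ i, ∑ l, G.adjMatrix ℂ i l = μ)
    (x y : Fin c → ℝ) (hx : ∑ i, x i = 0) (τ : ℝ)
    (h : ∃ γ : ℂ, ‖γ‖ = 1 ∧
      U (G.adjMatrix ℝ) τ *ᵥ (fun i => (x i : ℂ)) = γ • fun i => (y i : ℂ)) :
    ∃ γ' : ℂ, ‖γ'‖ = 1 ∧
      U (H.adjMatrix ℝ) τ *ᵥ (fun i => (x i : ℂ)) = γ' • fun i => (y i : ℂ) := by
  obtain ⟨γ, hγ, hU⟩ := h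
  set z : ℂ := Complex.I * (τ : ℂ) with hz
  set A : Matrix (Fin c) (Fin c) ℂ := G.adjMatrix ℂ with hA
  set J : Matrix (Fin c) (Fin c) ℂ := Matrix.of fun _ _ => (1 : ℂ) with hJ
  set xc : Fin c → ℂ := fun i => (x i : ℂ) with hxc
  set yc : Fin c → ℂ := fun i => (y i : ℂ) with hyc
  have hAJ : A * J = μ • J := by
    ext i j
    simp [Matrix.mul_apply, hJ, hrow i]
  have hJA : J * A = μ • J := by
    ext i j
    have : ∑ l, A l j = μ := by
      rw [← hrow j]
      exact Finset.sum_congr rfl fun l _ => by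
        simp [hA, SimpleGraph.adjMatrix_apply, SimpleGraph.adj_comm]
    simp [Matrix.mul_apply, hJ, this]
  have hcomm : Commute A J := hAJ.trans hJA.symm
  -- kernel facts
  have hJx : J *ᵥ xc = 0 := by
    funext i
    have : ∑ j, ((x j : ℂ)) = 0 := by
      rw [← Complex.ofReal_sum, hx, Complex.ofReal_zero]
    simpa [Matrix.mulVec, dotProduct, hJ, hxc] using this
  -- decomposition of the complement exponent
  have hdecomp : z • (H.adjMatrix ℂ) =
      (-z) • A + ((-z) • (1 : Matrix (Fin c) (Fin c) ℂ) + z • J) := by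
    rw [compl_adjMatrix_eq G H hH]
    module
  -- exp splits as a product
  have c1 : Commute ((-z) • A) ((-z) • (1 : Matrix (Fin c) (Fin c) ℂ)) :=
    ((Commute.one_right A).smul_left (-z)).smul_right (-z)
  have c2 : Commute ((-z) • A) (z • J) := (hcomm.smul_left (-z)).smul_right z
  have c3 : Commute ((-z) • (1 : Matrix (Fin c) (Fin c) ℂ)) (z • J) :=
    ((Commute.one_left J).smul_left (-z)).smul_right z
  have hsplit : NormedSpace.exp (z • (H.adjMatrix ℂ)) =
      NormedSpace.exp ((-z) • A) *
        (NormedSpace.exp ((-z) • (1 : Matrix (Fin c) (Fin c) ℂ)) *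
          NormedSpace.exp (z • J)) := by
    rw [hdecomp, Matrix.exp_add_of_commute _ _ (c1.add_right c2),
      Matrix.exp_add_of_commute _ _ c3]
  -- A is real symmetric
  have hAH : Aᴴ = A := by
    ext i j
    simp [hA, Matrix.conjTranspose_apply, SimpleGraph.adjMatrix_apply,
      apply_ite (starRingEnd ℂ), SimpleGraph.adj_comm]
  have hAT : Aᵀ = A := by
    simp [hA, SimpleGraph.transpose_adjMatrix]
  have hzstar : star z = -z := by
    rw [hz, Complex.star_def, _root_.map_mul, Complex.conj_I, Complex.conj_ofReal]
    ring
  -- exp(-z•A) = (exp(z•A))ᴴ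
  have hexpH : NormedSpace.exp ((-z) • A) = (NormedSpace.exp (z • A))ᴴ := by
    rw [← Matrix.exp_conjTranspose, Matrix.conjTranspose_smul, hAH, hzstar]
  -- exp(z•A) is symmetric
  have hsym : (NormedSpace.exp (z • A))ᵀ = NormedSpace.exp (z • A) := by
    rw [← Matrix.exp_transpose, Matrix.transpose_smul, hAT]
  -- key conjugation computation
  have hU' : NormedSpace.exp (z • A) *ᵥ xc = γ • yc := by
    have : U (G.adjMatrix ℝ) τ = NormedSpace.exp (z • A) := by
      rw [U, adjMatrix_map_ofReal, hz, hA]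
    rw [← this]
    exact hU
  have key : NormedSpace.exp ((-z) • A) *ᵥ xc = (starRingEnd ℂ) γ • yc := by
    rw [hexpH]
    funext i
    have e1 : ((NormedSpace.exp (z • A))ᴴ *ᵥ xc) i =
        (starRingEnd ℂ) ((NormedSpace.exp (z • A) *ᵥ xc) i) := by
      simp only [Matrix.mulVec, dotProduct, Matrix.conjTranspose_apply, map_sum,
        _root_.map_mul]
      refine Finset.sum_congr rfl fun j _ => ?_
      have : NormedSpace.exp (z • A) j i = NormedSpace.exp (z • A) i j := by
        conv_lhs => rw [← hsym]
        rw [Matrix.transpose_apply]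
      rw [this, hxc]
      simp [Complex.conj_ofReal]
    rw [e1, hU']
    simp [hyc, Complex.conj_ofReal]
  -- assemble
  refine ⟨Complex.exp (-z) * (starRingEnd ℂ) γ, ?_, ?_⟩
  · rw [norm_mul, Complex.norm_exp]
    simp [hz, hγ, Complex.norm_conj]
  · have hUc : U (H.adjMatrix ℝ) τ = NormedSpace.exp (z • (H.adjMatrix ℂ)) := by
      rw [U, adjMatrix_map_ofReal, hz]
    have eJ : NormedSpace.exp (z • J) *ᵥ xc = xc :=
      exp_mulVec_of_ker _ _ (by rw [Matrix.smul_mulVec, hJx, smul_zero])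
    calc U (H.adjMatrix ℝ) τ *ᵥ xc
        = NormedSpace.exp ((-z) • A) *ᵥ
            ((NormedSpace.exp ((-z) • (1 : Matrix (Fin c) (Fin c) ℂ))) *ᵥ
              (NormedSpace.exp (z • J) *ᵥ xc)) := by
          rw [hUc, hsplit, ← Matrix.mulVec_mulVec, ← Matrix.mulVec_mulVec]
      _ = NormedSpace.exp ((-z) • A) *ᵥ (Complex.exp (-z) • xc) := by
          rw [eJ, exp_smul_one, Matrix.smul_mulVec, Matrix.one_mulVec]
      _ = (Complex.exp (-z) * (starRingEnd ℂ) γ) • yc := by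
          rw [Matrix.mulVec_smul, key, smul_smul]

/-- Row sums of the adjacency matrix of a regular graph. -/
lemma row_sum_of_regular (G : SimpleGraph (Fin c)) [DecidableRel G.Adj] {k : ℕ}
    (hreg : G.IsRegularOfDegree k) (i : Fin c) :
    ∑ l, G.adjMatrix ℂ i l = (k : ℂ) := by
  calc ∑ l, G.adjMatrix ℂ i l = ((G.degree i : ℕ) : ℂ) := by
        simp [SimpleGraph.adjMatrix_apply, SimpleGraph.degree,
          SimpleGraph.neighborFinset_eq_filter, Finset.sum_boole]
    _ = (k : ℂ) := by rw [hreg i]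

end PSTAux

/-- Let `G` be `k`-regular on `c` vertices and `x, y ∈ ℝ^c` with
`𝟙ᵀx = 𝟙ᵀy = 0`, `τ > 0`. Then PST occurs between `x` and `y` in `G` at time `τ`
(relative to the adjacency matrix) iff it occurs in the complement `Gᶜ` at `τ`. -/
theorem stmt12 (c k : ℕ)
    (G : SimpleGraph (Fin c)) [DecidableRel G.Adj] [DecidableRel Gᶜ.Adj]
    (hreg : G.IsRegularOfDegree k)
    (x y : Fin c → ℝ) (hx : ∑ i, x i = 0) (hy : ∑ i, y i = 0)
    (τ : ℝ) (hτ : 0 < τ) :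
    (∃ γ : ℂ, ‖γ‖ = 1 ∧
        U (G.adjMatrix ℝ) τ *ᵥ (fun i => (x i : ℂ)) = γ • fun i => (y i : ℂ)) ↔
      (∃ γ' : ℂ, ‖γ'‖ = 1 ∧
        U (Gᶜ.adjMatrix ℝ) τ *ᵥ (fun i => (x i : ℂ)) = γ' • fun i => (y i : ℂ)) := by
  have hrowG : ∀ i, ∑ l, G.adjMatrix ℂ i l = (k : ℂ) :=
    PSTAux.row_sum_of_regular G hreg
  have hrowGc : ∀ i, ∑ l, Gᶜ.adjMatrix ℂ i l = (c : ℂ) - 1 - (k : ℂ) := by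
    intro i
    rw [PSTAux.compl_adjMatrix_eq G Gᶜ rfl]
    simp only [Matrix.sub_apply, Finset.sum_sub_distrib, Matrix.of_apply, hrowG i]
    simp [Matrix.one_apply, Finset.sum_ite_eq]
  constructor
  · exact PSTAux.pst_compl G Gᶜ rfl hrowG x y hx τ
  · exact PSTAux.pst_compl Gᶜ G (compl_compl G).symm hrowGc x y hx τ
end

section
/- Let G be a k-regular simple graph on c vertices with complement Gᶜ, and let x ∈ ℝ^c with 𝟙ᵀx = 0. Then for every t ∈ ℝ, | xᵀ · exp(i·t·A(G)) · x | = | xᵀ · exp(i·t·A(Gᶜ)) · x |. Consequently, for any 0 < C ≤ 1, the state x is C-sedentary in G if and only if x is C-sedentary in Gᶜ. -/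
open Matrix

open Nat in
lemma exp_mulVec_fixed {n : Type*} [Fintype n] [DecidableEq n]
    (M : Matrix n n ℂ) (v : n → ℂ) (h : M *ᵥ v = 0) :
    NormedSpace.exp M *ᵥ v = v := by
  letI : SeminormedRing (Matrix n n ℂ) := Matrix.linftyOpSemiNormedRing
  letI : NormedRing (Matrix n n ℂ) := Matrix.linftyOpNormedRing
  letI : NormedAlgebra ℂ (Matrix n n ℂ) := Matrix.linftyOpNormedAlgebra
  have hpow : ∀ m : ℕ, M ^ m *ᵥ v = if m = 0 then v else 0 := by
    intro m
    cases m with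
    | zero => simp
    | succ k => rw [pow_succ, ← mulVec_mulVec, h]; simp
  let l : Matrix n n ℂ →ₗ[ℂ] (n → ℂ) :=
    { toFun := fun N => N *ᵥ v
      map_add' := fun N P => add_mulVec N P v
      map_smul' := fun a N => smul_mulVec a N v }
  have hc : Continuous l := l.continuous_of_finiteDimensional
  have hs := (NormedSpace.exp_series_hasSum_exp' (𝕂 := ℂ) M).map l hc
  have : HasSum (fun m : ℕ => ((m !⁻¹ : ℂ) • (M ^ m *ᵥ v))) (NormedSpace.exp M *ᵥ v) := by
    convert hs using 2 with m
    · exact (l.map_smul _ _).symm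
    · rfl
  have := this.tsum_eq
  rw [← this, tsum_eq_single 0]
  · simp
  · intro m hm
    rw [hpow m, if_neg hm, smul_zero]

section
variable {c : ℕ} (G : SimpleGraph (Fin c)) [DecidableRel G.Adj]

lemma map_adj : (G.adjMatrix ℝ).map (Complex.ofReal ·) = G.adjMatrix ℂ := by
  ext i j
  simp [Matrix.map_apply, SimpleGraph.adjMatrix_apply, apply_ite Complex.ofReal]

end

lemma key_aux (c k : ℕ) (G : SimpleGraph (Fin c)) [DecidableRel G.Adj] [DecidableRel Gᶜ.Adj]
    (hreg : G.IsRegularOfDegree k)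
    (x : Fin c → ℝ) (hx : ∑ i, x i = 0) (t : ℝ) :
    ‖(fun i => (x i : ℂ)) ⬝ᵥ (U (Gᶜ.adjMatrix ℝ) t *ᵥ fun i => (x i : ℂ))‖ =
      ‖(fun i => (x i : ℂ)) ⬝ᵥ (U (G.adjMatrix ℝ) t *ᵥ fun i => (x i : ℂ))‖ := by
  letI : SeminormedRing (Matrix (Fin c) (Fin c) ℂ) := Matrix.linftyOpSemiNormedRing
  letI : NormedRing (Matrix (Fin c) (Fin c) ℂ) := Matrix.linftyOpNormedRing
  letI : NormedAlgebra ℂ (Matrix (Fin c) (Fin c) ℂ) := Matrix.linftyOpNormedAlgebra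
  set xC : Fin c → ℂ := fun i => (x i : ℂ) with hxC
  set s : ℂ := Complex.I * t with hsdef
  set A : Matrix (Fin c) (Fin c) ℂ := G.adjMatrix ℂ with hA
  set B : Matrix (Fin c) (Fin c) ℂ := Gᶜ.adjMatrix ℂ with hBdef
  set J : Matrix (Fin c) (Fin c) ℂ := Matrix.of (fun _ _ => (1 : ℂ)) with hJ
  have hB : B = J - 1 - A := by
    ext i j
    by_cases h : i = j
    · subst h; simp [hJ, hBdef, hA, Matrix.one_apply]
    · simp [hJ, hBdef, hA, SimpleGraph.adjMatrix_apply, SimpleGraph.compl_adj, h,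
        Matrix.one_apply, Matrix.sub_apply]
      by_cases hadj : G.Adj i j <;> simp [hadj, h]
  have hrow : ∀ i, ∑ l, A i l = (k : ℂ) := by
    intro i
    have h2 := SimpleGraph.adjMatrix_mulVec_const_apply_of_regular (α := ℂ) (a := (1:ℂ)) hreg (v := i)
    simpa [Matrix.mulVec, dotProduct, hA] using h2
  have hsymm : ∀ i j, A i j = A j i := by
    intro i j; simp [hA, SimpleGraph.adjMatrix_apply, G.adj_comm i j]
  have hcol : ∀ j, ∑ l, A l j = (k : ℂ) := by
    intro j; simp_rw [fun l => hsymm l j]; exact hrow j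
  have hAJ : A * J = (k : ℂ) • J := by
    ext i j
    simp only [Matrix.mul_apply, hJ, Matrix.smul_apply, Matrix.of_apply, mul_one, smul_eq_mul]
    exact hrow i
  have hJA : J * A = (k : ℂ) • J := by
    ext i j
    simp only [Matrix.mul_apply, hJ, Matrix.smul_apply, Matrix.of_apply, one_mul, mul_one, smul_eq_mul]
    exact hcol j
  have hcomm : Commute A J := by
    show A * J = J * A
    rw [hAJ, hJA]
  have hJx : J *ᵥ xC = 0 := by
    funext i
    simp only [Matrix.mulVec, dotProduct, hJ, Matrix.of_apply, one_mul, hxC,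
      Pi.zero_apply]
    rw [← Complex.ofReal_sum, hx, Complex.ofReal_zero]
  have hAconj : Aᴴ = A := by
    ext i j
    simp [Matrix.conjTranspose_apply, hA, SimpleGraph.adjMatrix_apply, G.adj_comm i j,
      apply_ite (star : ℂ → ℂ)]
  have hstars : star s = -s := by
    rw [hsdef, star_mul', Complex.star_def, Complex.conj_I, Complex.conj_ofReal]; ring
  have hAH : -(s • A) = (s • A)ᴴ := by
    rw [Matrix.conjTranspose_smul, hAconj, hstars, neg_smul]
  have hBexp : NormedSpace.exp (s • B) *ᵥ xC
      = Complex.exp (-s) • ((NormedSpace.exp (s • A))ᴴ *ᵥ xC) := by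
    have hsplit : s • B = (-(s • (1 : Matrix (Fin c) (Fin c) ℂ)) + -(s • A)) + s • J := by
      rw [hB]; module
    have c1 : Commute (-(s • (1 : Matrix (Fin c) (Fin c) ℂ)) + -(s • A)) (s • J) :=
      Commute.add_left ((((Commute.one_left J).smul_left s).smul_right s).neg_left)
        (((hcomm.smul_left s).smul_right s).neg_left)
    have c2 : Commute (-(s • (1 : Matrix (Fin c) (Fin c) ℂ))) (-(s • A)) :=
      ((((Commute.one_left A).smul_left s).smul_right s).neg_left).neg_right
    rw [hsplit, Matrix.exp_add_of_commute _ _ c1, ← mulVec_mulVec,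
      exp_mulVec_fixed (s • J) xC (by rw [smul_mulVec, hJx, smul_zero]),
      Matrix.exp_add_of_commute _ _ c2]
    have h1 : -(s • (1 : Matrix (Fin c) (Fin c) ℂ)) = algebraMap ℂ _ (-s) := by
      rw [Algebra.algebraMap_eq_smul_one, neg_smul]
    have h2 : NormedSpace.exp (algebraMap ℂ (Matrix (Fin c) (Fin c) ℂ) (-s))
        = algebraMap ℂ _ (Complex.exp (-s)) := by
      rw [Complex.exp_eq_exp_ℂ]; exact (NormedSpace.algebraMap_exp_comm _).symm
    rw [h1, h2, ← Algebra.smul_def,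
      smul_mulVec, hAH, Matrix.exp_conjTranspose]
  have hstarx : star xC = xC := by
    funext i; simp [hxC, Complex.star_def, Complex.conj_ofReal]
  have hconjdot : ∀ M : Matrix (Fin c) (Fin c) ℂ,
      xC ⬝ᵥ (Mᴴ *ᵥ xC) = star (xC ⬝ᵥ (M *ᵥ xC)) := by
    intro M
    calc xC ⬝ᵥ (Mᴴ *ᵥ xC) = (xC ᵥ* Mᴴ) ⬝ᵥ xC := dotProduct_mulVec _ _ _
    _ = star (M *ᵥ xC) ⬝ᵥ star xC := by rw [star_mulVec, hstarx]
    _ = star (xC ⬝ᵥ (M *ᵥ xC)) := star_dotProduct_star _ _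
  have hUB : U (Gᶜ.adjMatrix ℝ) t = NormedSpace.exp (s • B) := by
    rw [U, map_adj, ← hsdef, ← hBdef]
  have hUA : U (G.adjMatrix ℝ) t = NormedSpace.exp (s • A) := by
    rw [U, map_adj, ← hsdef, ← hA]
  rw [hUB, hUA, hBexp, dotProduct_smul, hconjdot]
  rw [smul_eq_mul, norm_mul]
  have h3 : ∀ z : ℂ, ‖star z‖ = ‖z‖ := fun z => Complex.norm_conj z
  rw [h3, Complex.norm_exp]
  simp [hsdef]

/-- Let `G` be `k`-regular on `c` vertices and `x ∈ ℝ^c` with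
`𝟙ᵀx = 0`. Then for every `t`, `|xᵀ·exp(itA(G))·x| = |xᵀ·exp(itA(Gᶜ))·x|`;
consequently, for any `0 < C ≤ 1`, `x` is `C`-sedentary in `G` iff it is
`C`-sedentary in `Gᶜ`. -/
theorem stmt13 (c k : ℕ)
    (G : SimpleGraph (Fin c)) [DecidableRel G.Adj] [DecidableRel Gᶜ.Adj]
    (hreg : G.IsRegularOfDegree k)
    (x : Fin c → ℝ) (hx : ∑ i, x i = 0) :
    (∀ t : ℝ,
      ‖(fun i => (x i : ℂ)) ⬝ᵥ (U (G.adjMatrix ℝ) t *ᵥ fun i => (x i : ℂ))‖ =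
        ‖(fun i => (x i : ℂ)) ⬝ᵥ (U (Gᶜ.adjMatrix ℝ) t *ᵥ fun i => (x i : ℂ))‖) ∧
      ∀ C : ℝ, 0 < C → C ≤ 1 →
        ((∀ t : ℝ, 0 < t →
            C ≤ ‖(fun i => (x i : ℂ)) ⬝ᵥ (U (G.adjMatrix ℝ) t *ᵥ fun i => (x i : ℂ))‖) ↔
          (∀ t : ℝ, 0 < t →
            C ≤ ‖(fun i => (x i : ℂ)) ⬝ᵥ (U (Gᶜ.adjMatrix ℝ) t *ᵥ fun i => (x i : ℂ))‖)) := by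
  have key := fun t => (key_aux c k G hreg x hx t).symm
  refine ⟨key, fun C hC hC1 => ⟨fun h t ht => ?_, fun h t ht => ?_⟩⟩
  · rw [← key t]; exact h t ht
  · rw [key t]; exact h t ht
end

section
/- Let G be a simple graph on n vertices with adjacency matrix A_G, and H a graph on c vertices with adjacency matrix A_H satisfying A_H·𝟙 = μ·𝟙. Let N be the adjacency matrix of the vertex corona G ∘ H, indexed by {1,…,n} ⊔ ({1,…,n} × {1,…,c}): N[i, j] = (A_G)_{ij}; N[i, (j,u)] = N[(j,u), i] = 1 if i = j and 0 otherwise; N[(i,u), (j,v)] = (A_H)_{uv} if i = j and 0 otherwise. Fix a vertex a of G and x, y ∈ ℝ^c with 𝟙ᵀx = 𝟙ᵀy = 0. If exp(i·τ·A_H)·x = γ·y for some τ > 0 and γ ∈ ℂ with |γ| = 1, then exp(i·τ·N)·(0, e_a ⊗ x) = γ·(0, e_a ⊗ y), where (0, e_a ⊗ x) is the vector supported on the a-th copy of H with values x. Conversely, if exp(i·τ·N)·(0, e_a ⊗ x) = γ·(0, e_a ⊗ y) then exp(i·τ·A_H)·x = γ·y. -/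
open Matrix

/-! Vectors `(0, e_a ⊗ z)` with `𝟙ᵀz = 0` are mapped by `N` to `(0, e_a ⊗ A_H z)`: the rows
indexed by vertices of `G` only see `𝟙ᵀz = 0`. Since `A_H` is symmetric with row sums `μ`,
`𝟙ᵀ(A_H z) = μ 𝟙ᵀz = 0` again, so the power series of `exp(iτN)` and `exp(iτA_H)` agree
term by term on these vectors, and `z ↦ (0, e_a ⊗ z)` is injective. -/

namespace Matrix

variable {m n : Type*} [Fintype m] [Fintype n]

theorem IsSymm.sum_mulVec {R : Type*} [CommSemiring R] {A : Matrix n n R} (hA : A.IsSymm)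
    {μ : R} (hμ : A *ᵥ 1 = μ • 1) (z : n → R) : ∑ i, (A *ᵥ z) i = μ * ∑ i, z i := by
  rw [← one_dotProduct, dotProduct_mulVec, ← hA.eq, vecMul_transpose, hμ, smul_dotProduct,
    one_dotProduct, smul_eq_mul]

variable [DecidableEq m] [DecidableEq n]

theorem pow_mulVec_eq_of_mapsTo {R : Type*} [Semiring R] {M : Matrix m m R}
    {B : Matrix n n R} {E : (n → R) → (m → R)} {s : Set (n → R)}
    (hs : Set.MapsTo (B *ᵥ ·) s s) (hE : ∀ z ∈ s, M *ᵥ E z = E (B *ᵥ z)) (k : ℕ)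
    {z : n → R} (hz : z ∈ s) :
    M ^ k *ᵥ E z = E (B ^ k *ᵥ z) := by
  induction k generalizing z with
  | zero => simp
  | succ k ih =>
    rw [pow_succ, pow_succ, ← mulVec_mulVec, ← mulVec_mulVec, hE z hz, ih (hs hz)]

variable {𝕂 : Type*} [RCLike 𝕂]

theorem hasSum_exp_mulVec_s15 (A : Matrix m m 𝕂) (v : m → 𝕂) :
    HasSum (fun k : ℕ => (k.factorial⁻¹ : 𝕂) • (A ^ k *ᵥ v)) (NormedSpace.exp A *ᵥ v) := by
  open scoped Norms.Operator in
  have h := (NormedSpace.exp_series_hasSum_exp' (𝕂 := 𝕂) A).map (mulVec.addMonoidHomLeft v)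
    (continuous_id.matrix_mulVec continuous_const)
  simp only [← smul_mulVec]
  exact h

theorem exp_mulVec_eq_of_mapsTo {M : Matrix m m 𝕂} {B : Matrix n n 𝕂}
    {E : (n → 𝕂) →ₗ[𝕂] (m → 𝕂)} {s : Set (n → 𝕂)} (hs : Set.MapsTo (B *ᵥ ·) s s)
    (hE : ∀ z ∈ s, M *ᵥ E z = E (B *ᵥ z)) {z : n → 𝕂} (hz : z ∈ s) :
    NormedSpace.exp M *ᵥ E z = E (NormedSpace.exp B *ᵥ z) := by
  have h := (hasSum_exp_mulVec_s15 B z).map E.toAddMonoidHom E.continuous_of_finiteDimensional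
  refine (hasSum_exp_mulVec_s15 M (E z)).unique ?_
  simpa [Function.comp_def, pow_mulVec_eq_of_mapsTo hs hE _ hz] using h

end Matrix

section Corona

variable {V W R : Type*} [DecidableEq V] [CommSemiring R]

/-- The vector `(0, e_a ⊗ z)` of the vertex corona, supported on the copy of `H` at `a`. -/
def coronaSingle (a : V) : (W → R) →ₗ[R] (V ⊕ V × W → R) where
  toFun z := Sum.elim 0 fun p => if p.1 = a then z p.2 else 0
  map_add' z w := by ext (_ | ⟨j, u⟩) <;> simp [ite_add_ite]
  map_smul' r z := by ext (_ | ⟨j, u⟩) <;> simp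

theorem coronaSingle_injective (a : V) :
    Function.Injective (coronaSingle (W := W) (R := R) a) :=
  fun z w h => funext fun u => by simpa [coronaSingle] using congrFun h (Sum.inr (a, u))

theorem mulVec_coronaSingle [Fintype V] [Fintype W] {N : Matrix (V ⊕ V × W) (V ⊕ V × W) R}
    {A : Matrix W W R}
    (hN₂ : ∀ (i j : V) (u : W), N (Sum.inl i) (Sum.inr (j, u)) = if i = j then 1 else 0)
    (hN₄ : ∀ (i j : V) (u v : W),
      N (Sum.inr (i, u)) (Sum.inr (j, v)) = if i = j then A u v else 0)
    (a : V) {z : W → R} (hz : ∑ u, z u = 0) :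
    N *ᵥ coronaSingle a z = coronaSingle a (A *ᵥ z) := by
  ext (i | ⟨j, v⟩) <;>
    simp [coronaSingle, mulVec, dotProduct, Fintype.sum_prod_type, hN₂, hN₄, hz]

theorem U_mulVec_coronaSingle [Fintype V] [Fintype W] [DecidableEq W]
    {N : Matrix (V ⊕ V × W) (V ⊕ V × W) ℝ} {A : Matrix W W ℝ} (hA : A.IsSymm) {μ : ℝ}
    (hμ : A *ᵥ 1 = μ • 1)
    (hN₂ : ∀ (i j : V) (u : W), N (Sum.inl i) (Sum.inr (j, u)) = if i = j then 1 else 0)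
    (hN₄ : ∀ (i j : V) (u v : W),
      N (Sum.inr (i, u)) (Sum.inr (j, v)) = if i = j then A u v else 0)
    (a : V) (t : ℝ) {z : W → ℂ} (hz : ∑ u, z u = 0) :
    U N t *ᵥ coronaSingle a z = coronaSingle a (U A t *ᵥ z) := by
  have hμℂ : A.map (Complex.ofReal ·) *ᵥ 1 = (μ : ℂ) • 1 := by
    ext u
    simpa [mulVec, dotProduct] using congr_arg Complex.ofReal (congrFun hμ u)
  have hs : Set.MapsTo (((Complex.I * t) • A.map (Complex.ofReal ·)) *ᵥ ·)
      {z | ∑ u, z u = 0} {z | ∑ u, z u = 0} := fun z hz => by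
    simp [smul_mulVec, ← Finset.mul_sum, (hA.map _).sum_mulVec hμℂ, hz.out]
  refine exp_mulVec_eq_of_mapsTo hs (fun z hz => ?_) hz
  rw [smul_mulVec, smul_mulVec, map_smul, mulVec_coronaSingle (A := A.map (Complex.ofReal ·))
    (by simp [hN₂, apply_ite Complex.ofReal]) (by simp [hN₄, apply_ite Complex.ofReal]) a hz]

end Corona

theorem stmt15_general (n c : ℕ)
    (A_H : Matrix (Fin c) (Fin c) ℝ) (hH : A_H.IsSymm)
    (μ : ℝ) (hμ : A_H *ᵥ (fun _ => (1 : ℝ)) = μ • fun _ => (1 : ℝ))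
    (N : Matrix (Fin n ⊕ Fin n × Fin c) (Fin n ⊕ Fin n × Fin c) ℝ)
    (hN₂ : ∀ (i j : Fin n) (u : Fin c),
      N (Sum.inl i) (Sum.inr (j, u)) = if i = j then 1 else 0)
    (hN₄ : ∀ (i j : Fin n) (u v : Fin c),
      N (Sum.inr (i, u)) (Sum.inr (j, v)) = if i = j then A_H u v else 0)
    (a : Fin n) (x y : Fin c → ℝ) (hx : ∑ i, x i = 0)
    (τ : ℝ) (γ : ℂ) :
    U A_H τ *ᵥ (fun u => (x u : ℂ)) = γ • (fun u => (y u : ℂ)) ↔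
      U N τ *ᵥ Sum.elim (0 : Fin n → ℂ) (fun p => if p.1 = a then (x p.2 : ℂ) else 0) =
        γ • Sum.elim (0 : Fin n → ℂ) (fun p => if p.1 = a then (y p.2 : ℂ) else 0) := by
  have hxℂ : ∑ u, (x u : ℂ) = 0 := by exact_mod_cast hx
  change _ ↔ U N τ *ᵥ coronaSingle a (fun u => (x u : ℂ)) =
    γ • coronaSingle a (fun u => (y u : ℂ))
  rw [U_mulVec_coronaSingle hH hμ hN₂ hN₄ a τ hxℂ, ← map_smul,
    (coronaSingle_injective a).eq_iff]

/-- Let `N` be the adjacency matrix of the vertex corona `G ∘ H`,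
where `A_H·𝟙 = μ·𝟙`. Fix a vertex `a` of `G` and `x, y ∈ ℝ^c` with
`𝟙ᵀx = 𝟙ᵀy = 0`. Then `exp(iτA_H)·x = γ·y` (with `τ > 0`, `|γ| = 1`) if and only
if `exp(iτN)·(0, e_a ⊗ x) = γ·(0, e_a ⊗ y)`. -/
theorem stmt15 (n c : ℕ)
    (A_G : Matrix (Fin n) (Fin n) ℝ) (hG : A_G.IsSymm)
    (A_H : Matrix (Fin c) (Fin c) ℝ) (hH : A_H.IsSymm)
    (μ : ℝ) (hμ : A_H *ᵥ (fun _ => (1 : ℝ)) = μ • fun _ => (1 : ℝ))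
    (N : Matrix (Fin n ⊕ Fin n × Fin c) (Fin n ⊕ Fin n × Fin c) ℝ)
    (hN₁ : ∀ i j : Fin n, N (Sum.inl i) (Sum.inl j) = A_G i j)
    (hN₂ : ∀ (i j : Fin n) (u : Fin c),
      N (Sum.inl i) (Sum.inr (j, u)) = if i = j then 1 else 0)
    (hN₃ : ∀ (i j : Fin n) (u : Fin c),
      N (Sum.inr (j, u)) (Sum.inl i) = if i = j then 1 else 0)
    (hN₄ : ∀ (i j : Fin n) (u v : Fin c),
      N (Sum.inr (i, u)) (Sum.inr (j, v)) = if i = j then A_H u v else 0)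
    (a : Fin n) (x y : Fin c → ℝ) (hx : ∑ i, x i = 0) (hy : ∑ i, y i = 0)
    (τ : ℝ) (hτ : 0 < τ) (γ : ℂ) (hγ : ‖γ‖ = 1) :
    U A_H τ *ᵥ (fun u => (x u : ℂ)) = γ • (fun u => (y u : ℂ)) ↔
      U N τ *ᵥ Sum.elim (0 : Fin n → ℂ) (fun p => if p.1 = a then (x p.2 : ℂ) else 0) =
        γ • Sum.elim (0 : Fin n → ℂ) (fun p => if p.1 = a then (y p.2 : ℂ) else 0) :=
  stmt15_general n c A_H hH μ hμ N hN₂ hN₄ a x y hx τ γ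
end

section
/- Let G be a simple graph on n vertices with adjacency matrix A_G, and H a graph on c vertices with adjacency matrix A_H satisfying A_H·𝟙 = μ·𝟙. Let N = A_G ⊗ J_c + I_n ⊗ A_H be the adjacency matrix of the lexicographic product G[H], where J_c is the c×c all-ones matrix. Fix a vertex a of G and x, y ∈ ℝ^c with 𝟙ᵀx = 𝟙ᵀy = 0. If exp(i·τ·A_H)·x = γ·y for some τ > 0 and γ ∈ ℂ with |γ| = 1, then exp(i·τ·N)·(e_a ⊗ x) = γ·(e_a ⊗ y), where (e_a ⊗ x)(j,u) = x_u if j = a and 0 otherwise. In particular, pair PST in H between pair states orthogonal to 𝟙 yields pair PST in G[H] at the same time. -/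
/-!
Put `C = I - J/c`, the orthogonal projection onto `𝟙ᗮ`, and `P = e_a ⊗ C`. Since `J C = 0`, the
`A_G ⊗ J` part of `N` annihilates `P`, while `A_H` commutes with `J` (it is symmetric with constant
row sums), hence with `C`; so `N P = P A_H`. Such an intertwining of generators passes to the
exponentials, `U_N(τ) P = P U_{A_H}(τ)`, and since `C` fixes `x` and `y` the claim follows by
applying both sides to `x`.
-/

open Matrix Kronecker

namespace Matrix

variable {l m n k : Type*}

section Intertwining

variable {𝕂 : Type*} [RCLike 𝕂] [Fintype m] [DecidableEq m] [Fintype n] [DecidableEq n]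

attribute [local instance] Matrix.linftyOpNormedRing Matrix.linftyOpNormedAlgebra

theorem exp_mul_eq_mul_exp_of_mul_eq_s16 {M : Matrix m m 𝕂} {B : Matrix n n 𝕂} {P : Matrix m n 𝕂}
    (h : M * P = P * B) : NormedSpace.exp M * P = P * NormedSpace.exp B := by
  have hpow (j : ℕ) : M ^ j * P = P * B ^ j := by
    induction j with
    | zero => simp
    | succ j ih => rw [pow_succ', Matrix.mul_assoc, ih, ← Matrix.mul_assoc, h, Matrix.mul_assoc,
        ← pow_succ']
  rw [NormedSpace.exp_eq_tsum 𝕂, NormedSpace.exp_eq_tsum 𝕂]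
  calc (∑' j : ℕ, (j.factorial⁻¹ : 𝕂) • M ^ j) * P
      = ∑' j : ℕ, ((j.factorial⁻¹ : 𝕂) • M ^ j) * P :=
        (NormedSpace.expSeries_summable' M).map_tsum (mulRightLinearMap m 𝕂 P)
          (continuous_id.matrix_mul continuous_const)
    _ = ∑' j : ℕ, P * ((j.factorial⁻¹ : 𝕂) • B ^ j) := by
        simp only [Matrix.smul_mul, Matrix.mul_smul, hpow]
    _ = P * ∑' j : ℕ, (j.factorial⁻¹ : 𝕂) • B ^ j :=
        ((NormedSpace.expSeries_summable' B).map_tsum (mulLeftLinearMap n 𝕂 P)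
          (continuous_const.matrix_mul continuous_id)).symm

end Intertwining

section VecKron

variable {α : Type*} [CommSemiring α]

def vecKron (v : m → α) (X : Matrix n k α) : Matrix (m × n) k α :=
  of fun p u => v p.1 * X p.2 u

@[simp]
theorem vecKron_apply (v : m → α) (X : Matrix n k α) (p : m × n) (u : k) :
    vecKron v X p u = v p.1 * X p.2 u := rfl

@[simp]
theorem vecKron_zero (v : m → α) : vecKron v (0 : Matrix n k α) = 0 := by
  ext; simp

theorem vecKron_mul [Fintype k] (v : m → α) (X : Matrix n k α) (Y : Matrix k l α) :
    vecKron v X * Y = vecKron v (X * Y) := by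
  ext p u
  simp only [mul_apply, vecKron_apply, Finset.mul_sum, mul_assoc]

theorem kronecker_mul_vecKron [Fintype m] [Fintype n] {l' : Type*} (A : Matrix l m α)
    (B : Matrix l' n α) (v : m → α) (X : Matrix n k α) :
    (A ⊗ₖ B) * vecKron v X = vecKron (A *ᵥ v) (B * X) := by
  ext ⟨i, s⟩ u
  simp only [mul_apply, vecKron_apply, kroneckerMap_apply, Fintype.sum_prod_type, mulVec,
    dotProduct, Finset.sum_mul_sum]
  exact Finset.sum_congr rfl fun _ _ => Finset.sum_congr rfl fun _ _ => by ring

theorem vecKron_mulVec [Fintype k] (v : m → α) (X : Matrix n k α) (w : k → α) :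
    vecKron v X *ᵥ w = fun p => v p.1 * (X *ᵥ w) p.2 := by
  ext p
  simp only [mulVec, dotProduct, vecKron_apply, Finset.mul_sum, mul_assoc]

end VecKron

theorem IsSymm.commute_allOnes [Fintype n] {R : Type*} [Semiring R] {A : Matrix n n R}
    (hA : A.IsSymm) {μ : R} (hμ : A *ᵥ (fun _ => 1) = μ • fun _ => 1) :
    Commute A (of fun _ _ => 1) := by
  have hrow (i : n) : ∑ j, A i j = μ := by simpa [mulVec, dotProduct] using congrFun hμ i
  ext i j
  simp only [mul_apply, of_apply, mul_one, one_mul, hrow]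
  rw [← hrow j]
  exact Finset.sum_congr rfl fun k _ => hA.apply k j

section Centering

variable (n) (K : Type*) [Fintype n] [DecidableEq n] [Field K]

def centering : Matrix n n K := 1 - (Fintype.card n : K)⁻¹ • of fun _ _ => 1

variable {n K}

theorem allOnes_mul_centering [CharZero K] :
    (of fun _ _ => 1 : Matrix n n K) * centering n K = 0 := by
  ext i j
  have : Nonempty n := ⟨i⟩
  have hcard : (Fintype.card n : K) ≠ 0 := Nat.cast_ne_zero.mpr Fintype.card_ne_zero
  simp [centering, mul_apply, one_apply, hcard]

theorem centering_mulVec_of_sum_eq_zero {v : n → K} (hv : ∑ i, v i = 0) :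
    centering n K *ᵥ v = v := by
  have hJv : (of fun _ _ => 1 : Matrix n n K) *ᵥ v = 0 := by
    ext i
    simp [mulVec, dotProduct, hv]
  rw [centering, sub_mulVec, one_mulVec, smul_mulVec, hJv, smul_zero, sub_zero]

theorem commute_centering {A : Matrix n n K} (h : Commute A (of fun _ _ => 1)) :
    Commute A (centering n K) :=
  (Commute.one_right A).sub_right (h.smul_right _)

end Centering

end Matrix

open Matrix

theorem U_mul_map_eq_map_mul_U {m n : Type*} [Fintype m] [DecidableEq m] [Fintype n]
    [DecidableEq n] {R : Matrix m m ℝ} {S : Matrix n n ℝ} {P : Matrix m n ℝ} (h : R * P = P * S)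
    (t : ℝ) : U R t * P.map Complex.ofReal = P.map Complex.ofReal * U S t := by
  refine exp_mul_eq_mul_exp_of_mul_eq_s16 ?_
  rw [Matrix.smul_mul, Matrix.mul_smul]
  congr 1
  exact (Matrix.map_mul (f := Complex.ofRealHom)).symm.trans
    ((congrArg (Matrix.map · Complex.ofRealHom) h).trans Matrix.map_mul)

theorem stmt16_general (n c : ℕ)
    (A_G : Matrix (Fin n) (Fin n) ℝ)
    (A_H : Matrix (Fin c) (Fin c) ℝ) (hH : A_H.IsSymm)
    (μ : ℝ) (hμ : A_H *ᵥ (fun _ => (1 : ℝ)) = μ • fun _ => (1 : ℝ))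
    (N : Matrix (Fin n × Fin c) (Fin n × Fin c) ℝ)
    (hN : N = A_G ⊗ₖ (Matrix.of fun (_ : Fin c) (_ : Fin c) => (1 : ℝ)) +
      (1 : Matrix (Fin n) (Fin n) ℝ) ⊗ₖ A_H)
    (a : Fin n) (x y : Fin c → ℝ) (hx : ∑ i, x i = 0) (hy : ∑ i, y i = 0)
    (τ : ℝ) (γ : ℂ)
    (hPST : U A_H τ *ᵥ (fun u => (x u : ℂ)) = γ • fun u => (y u : ℂ)) :
    U N τ *ᵥ (fun p => if p.1 = a then (x p.2 : ℂ) else 0) =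
      γ • fun p => if p.1 = a then (y p.2 : ℂ) else 0 := by
  set P := vecKron (Pi.single a 1) (centering (Fin c) ℝ)
  have hNP : N * P = P * A_H := by
    rw [hN, Matrix.add_mul, kronecker_mul_vecKron, kronecker_mul_vecKron, allOnes_mul_centering,
      vecKron_zero, zero_add, one_mulVec, (commute_centering (hH.commute_allOnes hμ)).eq,
      vecKron_mul]
  have hP (v : Fin c → ℝ) (hv : ∑ i, v i = 0) :
      P.map Complex.ofReal *ᵥ (fun u => (v u : ℂ)) =
        fun p => if p.1 = a then (v p.2 : ℂ) else 0 := by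
    ext p
    refine (RingHom.map_mulVec Complex.ofRealHom P v p).symm.trans ?_
    rw [vecKron_mulVec, centering_mulVec_of_sum_eq_zero hv]
    rcases eq_or_ne p.1 a with h | h <;> simp [h]
  calc U N τ *ᵥ (fun p => if p.1 = a then (x p.2 : ℂ) else 0)
      = (U N τ * P.map Complex.ofReal) *ᵥ (fun u => (x u : ℂ)) := by rw [← hP x hx, mulVec_mulVec]
    _ = P.map Complex.ofReal *ᵥ (U A_H τ *ᵥ (fun u => (x u : ℂ))) := by
        rw [U_mul_map_eq_map_mul_U hNP, mulVec_mulVec]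
    _ = γ • fun p => if p.1 = a then (y p.2 : ℂ) else 0 := by rw [hPST, mulVec_smul, hP y hy]

/-- Let `N = A_G ⊗ J_c + I_n ⊗ A_H` be the adjacency matrix of the
lexicographic product `G[H]`, where `A_H·𝟙 = μ·𝟙`. Fix a vertex `a` of `G` and
`x, y ∈ ℝ^c` with `𝟙ᵀx = 𝟙ᵀy = 0`. If `exp(iτA_H)·x = γ·y` with `τ > 0`,
`|γ| = 1`, then `exp(iτN)·(e_a ⊗ x) = γ·(e_a ⊗ y)`. -/
theorem stmt16 (n c : ℕ)
    (A_G : Matrix (Fin n) (Fin n) ℝ) (hG : A_G.IsSymm)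
    (A_H : Matrix (Fin c) (Fin c) ℝ) (hH : A_H.IsSymm)
    (μ : ℝ) (hμ : A_H *ᵥ (fun _ => (1 : ℝ)) = μ • fun _ => (1 : ℝ))
    (N : Matrix (Fin n × Fin c) (Fin n × Fin c) ℝ)
    (hN : N = A_G ⊗ₖ (Matrix.of fun (_ : Fin c) (_ : Fin c) => (1 : ℝ)) +
      (1 : Matrix (Fin n) (Fin n) ℝ) ⊗ₖ A_H)
    (a : Fin n) (x y : Fin c → ℝ) (hx : ∑ i, x i = 0) (hy : ∑ i, y i = 0)
    (τ : ℝ) (hτ : 0 < τ) (γ : ℂ) (hγ : ‖γ‖ = 1)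
    (hPST : U A_H τ *ᵥ (fun u => (x u : ℂ)) = γ • fun u => (y u : ℂ)) :
    U N τ *ᵥ (fun p => if p.1 = a then (x p.2 : ℂ) else 0) =
      γ • fun p => if p.1 = a then (y p.2 : ℂ) else 0 :=
  stmt16_general n c A_G A_H hH μ hμ N hN a x y hx hy τ γ hPST
end
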